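/- arXiv:2409.19236 — 11 statements merged into one kernel-verified Lean document; each statement's English description precedes it below -/
import Mathlib

section
/- A partitioned formula φ(x;y) has the strict-order property in a complete first-order theory T if and only if for every n<ω the formula φ exhibits in T the n-pattern (C_n, I_n), where C_n = {({i+1}, {i}) : i<n−1} and I_n = {({i}, {i+1}) : i<n−1}. -/
/-!
The sets `φ(M, b) = {a | M ⊨ φ(a, b)}` turn both sides into statements about strictly increasing
chains of definable sets: `φ` has SOP iff some model carries an `ω`-chain
`φ(M, b₀) ⊂ φ(M, b₁) ⊂ ⋯`, and `φ` exhibits `(C_n, I_n)` iff some model carries such a chain of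
length `n`, since `C_n` and `I_n` say exactly that consecutive sets are strictly increasing.
Long finite chains in models `M_n` give an `ω`-chain in a nonprincipal ultraproduct of the `M_n`
by Łoś's theorem: the pair `i < j` is a strict inclusion in every `M_n` with `j < n`.
-/

open FirstOrder Language Set

universe u v w

/-- A partitioned formula `φ(x;y)` (object variables `α`, parameter variables `β`)
exhibits the pattern `(C, I)` (indexed by `S`) in the theory `T`. -/
def ExhibitsPattern {L : FirstOrder.Language.{u, v}} (T : L.Theory) {α β S : Type*}
    (φ : L.Formula (α ⊕ β)) (C I : Set (Set S × Set S)) : Prop :=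
  ∃ (M : Theory.ModelType.{u, v, w} T) (b : S → β → M),
    (∀ p ∈ C, ∃ a : α → M,
      (∀ i ∈ p.1, φ.Realize (Sum.elim a (b i))) ∧
      (∀ j ∈ p.2, ¬ φ.Realize (Sum.elim a (b j)))) ∧
    (∀ p ∈ I, ¬ ∃ a : α → M,
      (∀ i ∈ p.1, φ.Realize (Sum.elim a (b i))) ∧
      (∀ j ∈ p.2, ¬ φ.Realize (Sum.elim a (b j))))

/-- `(C, I)` is a pattern: the condition `(∅, ∅)` is excluded. -/
def IsPattern {S : Type*} (C I : Set (Set S × Set S)) : Prop :=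
  (∅, ∅) ∉ C ∧ (∅, ∅) ∉ I

/-- A pattern is exhibitable if some partitioned formula of some complete
first-order theory exhibits it. -/
def Exhibitable {S : Type*} (C I : Set (Set S × Set S)) : Prop :=
  ∃ (L : FirstOrder.Language.{0, 0}) (T : L.Theory) (_ : T.IsComplete) (α β : Type)
    (φ : L.Formula (α ⊕ β)), ExhibitsPattern.{0, 0, 0} T φ C I

/-- `φ(x;y)` has the strict-order property in `T`. -/
def HasSOP {L : FirstOrder.Language.{u, v}} (T : L.Theory) {α β : Type*}
    (φ : L.Formula (α ⊕ β)) : Prop :=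
  ∃ (M : Theory.ModelType.{u, v, w} T) (b : ℕ → β → M),
    ∀ i j : ℕ,
      (∃ a : α → M, φ.Realize (Sum.elim a (b j)) ∧ ¬ φ.Realize (Sum.elim a (b i))) ↔ i < j

open Filter

namespace FirstOrder.Language

variable {L : Language.{u, v}} {α β : Type*}

namespace Formula

def definedSet {M : Type*} [L.Structure M] (φ : L.Formula (α ⊕ β)) (c : β → M) : Set (α → M) :=
  {a | φ.Realize (Sum.elim a c)}

theorem not_definedSet_subset_iff {M : Type*} [L.Structure M] (φ : L.Formula (α ⊕ β))
    {c c' : β → M} :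
    ¬ φ.definedSet c ⊆ φ.definedSet c' ↔
      ∃ a : α → M, φ.Realize (Sum.elim a c) ∧ ¬ φ.Realize (Sum.elim a c') :=
  Set.not_subset

theorem exists_realize_singleton_pair_iff {M S : Type*} [L.Structure M] (φ : L.Formula (α ⊕ β))
    (b : S → β → M) (i j : S) :
    (∃ a : α → M, (∀ k ∈ ({i} : Set S), φ.Realize (Sum.elim a (b k))) ∧
        ∀ k ∈ ({j} : Set S), ¬ φ.Realize (Sum.elim a (b k))) ↔
      ¬ φ.definedSet (b i) ⊆ φ.definedSet (b j) := by
  simp only [mem_singleton_iff, forall_eq]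
  exact (φ.not_definedSet_subset_iff).symm

section Ultraproduct

variable {ι : Type*} {M : ι → Type*} [∀ n, L.Structure (M n)] (U : Ultrafilter ι)
  (φ : L.Formula (α ⊕ β))

theorem coe_mem_definedSet_ultraproduct_iff [∀ n, Nonempty (M n)] (a : α → ∀ n, M n)
    (c : β → ∀ n, M n) :
    (fun x => (a x : (U : Filter ι).Product M)) ∈
        φ.definedSet (fun y => (c y : (U : Filter ι).Product M)) ↔
      ∀ᶠ n in U, (fun x => a x n) ∈ φ.definedSet (fun y => c y n) := by
  have h := Ultraproduct.realize_formula_cast (u := U) φ (Sum.elim a c)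
  have hc : ∀ n, (fun s => Sum.elim a c s n) = Sum.elim (fun x => a x n) (fun y => c y n) :=
    fun n => funext (Sum.rec (fun _ => rfl) (fun _ => rfl))
  simp only [hc] at h
  refine Iff.trans (iff_of_eq ?_) h
  exact congrArg φ.Realize (funext (Sum.rec (fun _ => rfl) (fun _ => rfl)))

theorem exists_coe_eq_ultraproduct (a : α → (U : Filter ι).Product M) :
    ∃ A : α → ∀ n, M n, a = fun x => (A x : (U : Filter ι).Product M) :=
  ⟨fun x => (a x).out, funext fun _ => (Quotient.out_eq _).symm⟩

theorem definedSet_ssubset_ultraproduct [∀ n, Nonempty (M n)] {c c' : β → ∀ n, M n}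
    (h : ∀ᶠ n in U, φ.definedSet (fun y => c y n) ⊂ φ.definedSet (fun y => c' y n)) :
    φ.definedSet (fun y => (c y : (U : Filter ι).Product M)) ⊂
      φ.definedSet (fun y => (c' y : (U : Filter ι).Product M)) := by
  have hsub : φ.definedSet (fun y => (c y : (U : Filter ι).Product M)) ⊆
      φ.definedSet (fun y => (c' y : (U : Filter ι).Product M)) := by
    intro a ha
    obtain ⟨A, rfl⟩ := exists_coe_eq_ultraproduct U a
    rw [coe_mem_definedSet_ultraproduct_iff] at ha ⊢
    exact (ha.and h).mono fun n hn => hn.2.subset hn.1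
  have hwitness : ∀ n, ∃ a : α → M n,
      φ.definedSet (fun y => c y n) ⊂ φ.definedSet (fun y => c' y n) →
        a ∈ φ.definedSet (fun y => c' y n) ∧ a ∉ φ.definedSet (fun y => c y n) := by
    intro n
    by_cases hn : φ.definedSet (fun y => c y n) ⊂ φ.definedSet (fun y => c' y n)
    · obtain ⟨a, ha', ha⟩ := exists_of_ssubset hn
      exact ⟨a, fun _ => ⟨ha', ha⟩⟩
    · exact ⟨Classical.arbitrary _, fun h => absurd h hn⟩
  choose A hA using hwitness
  have hA' := h.mono fun n hn => hA n hn
  refine (ssubset_iff_of_subset hsub).2 ⟨fun x => ((fun n => A n x) : (U : Filter ι).Product M),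
    ?_, ?_⟩
  · exact (coe_mem_definedSet_ultraproduct_iff U φ _ _).2 (hA'.mono fun n hn => hn.1)
  · rw [coe_mem_definedSet_ultraproduct_iff, ← Ultrafilter.eventually_not]
    exact hA'.mono fun n hn => hn.2

end Ultraproduct

end Formula

theorem Theory.ultraproduct_model {T : L.Theory} {ι : Type*} (M : ι → T.ModelType)
    (U : Ultrafilter ι) : (U : Filter ι).Product (fun n => M n) ⊨ T := by
  refine (Theory.model_iff _).2 fun σ hσ => ?_
  rw [Ultraproduct.sentence_realize]
  exact Filter.Eventually.of_forall fun n => (M n).is_model.realize_of_mem σ hσ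

end FirstOrder.Language

theorem Fin.strictMono_iff_lt_succ' {X : Type*} [Preorder X] {n : ℕ} {f : Fin n → X} :
    StrictMono f ↔ ∀ (i : ℕ) (h : i + 1 < n), f ⟨i, Nat.lt_of_succ_lt h⟩ < f ⟨i + 1, h⟩ := by
  refine ⟨fun hf i h => hf (Fin.mk_lt_mk.2 i.lt_succ_self), fun hf => ?_⟩
  cases n with
  | zero => exact fun i => i.elim0
  | succ m => exact Fin.strictMono_iff_lt_succ.2 fun i => hf i (Nat.succ_lt_succ i.isLt)

section Patterns

variable {L : FirstOrder.Language.{u, v}} (T : L.Theory) {α β : Type*} (φ : L.Formula (α ⊕ β))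

theorem hasSOP_iff_exists_strictMono :
    HasSOP.{u, v, w} T φ ↔ ∃ (M : Theory.ModelType.{u, v, w} T) (b : ℕ → β → M),
      StrictMono fun i => φ.definedSet (b i) := by
  refine exists_congr fun M => exists_congr fun b => ?_
  simp only [← Formula.not_definedSet_subset_iff, not_iff_comm, not_lt]
  exact ⟨fun h => strictMono_of_le_iff_le fun i j => h j i, fun h i j => h.le_iff_le.symm⟩

def sopPatternConsistent (n : ℕ) : Set (Set (Fin n) × Set (Fin n)) :=
  {p | ∃ (i : ℕ) (h : i + 1 < n), p = ({⟨i + 1, h⟩}, {⟨i, Nat.lt_of_succ_lt h⟩})}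

def sopPatternInconsistent (n : ℕ) : Set (Set (Fin n) × Set (Fin n)) :=
  {p | ∃ (i : ℕ) (h : i + 1 < n), p = ({⟨i, Nat.lt_of_succ_lt h⟩}, {⟨i + 1, h⟩})}

theorem exhibitsPattern_sopPattern_iff (n : ℕ) :
    ExhibitsPattern.{u, v, w} T φ (sopPatternConsistent n) (sopPatternInconsistent n) ↔
      ∃ (M : Theory.ModelType.{u, v, w} T) (b : Fin n → β → M),
        StrictMono fun k => φ.definedSet (b k) := by
  refine exists_congr fun M => exists_congr fun b => ?_
  rw [Fin.strictMono_iff_lt_succ']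
  constructor
  · rintro ⟨hC, hI⟩ i h
    refine ⟨?_, ?_⟩
    · exact not_not.1 ((φ.exists_realize_singleton_pair_iff b _ _).not.1 (hI _ ⟨i, h, rfl⟩))
    · exact (φ.exists_realize_singleton_pair_iff b _ _).1 (hC _ ⟨i, h, rfl⟩)
  · intro H
    refine ⟨?_, ?_⟩
    · rintro _ ⟨i, h, rfl⟩
      exact (φ.exists_realize_singleton_pair_iff b _ _).2 (H i h).2
    · rintro _ ⟨i, h, rfl⟩
      exact (φ.exists_realize_singleton_pair_iff b _ _).not.2 (not_not.2 (H i h).1)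

theorem hasSOP_of_forall_exists_strictMono
    (h : ∀ n, ∃ (M : Theory.ModelType.{u, v, w} T) (b : Fin n → β → M),
      StrictMono fun k => φ.definedSet (b k)) : HasSOP.{u, v, w} T φ := by
  choose M b hb using h
  let U : Ultrafilter ℕ := hyperfilter ℕ
  let B : ℕ → ∀ n, β → M n := fun i n => if hi : i < n then b n ⟨i, hi⟩ else Classical.arbitrary _
  have hB : ∀ i n (hi : i < n), B i n = b n ⟨i, hi⟩ := fun i n hi => dif_pos hi
  let N := (U : Filter ℕ).Product fun n => M n
  have : N ⊨ T := Theory.ultraproduct_model M U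
  refine (hasSOP_iff_exists_strictMono T φ).2
    ⟨Theory.ModelType.of T N, fun i y => ((fun n => B i n y : ∀ n, M n) : N), fun i j hij => ?_⟩
  refine Formula.definedSet_ssubset_ultraproduct U φ ?_
  filter_upwards [(eventually_gt_atTop j).filter_mono Nat.hyperfilter_le_atTop] with n hn
  rw [hB i n (hij.trans hn), hB j n hn]
  exact hb n (Fin.mk_lt_mk.2 hij)

end Patterns

theorem strict_order_property_iff_exhibits_patterns_general
    {L : FirstOrder.Language.{u, v}} (T : L.Theory)
    {α β : Type*} (φ : L.Formula (α ⊕ β)) :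
    HasSOP.{u, v, w} T φ ↔
      ∀ n : ℕ, ExhibitsPattern.{u, v, w} T φ
        {p : Set (Fin n) × Set (Fin n) | ∃ (i : ℕ) (h : i + 1 < n),
          p = ({(⟨i + 1, h⟩ : Fin n)}, {(⟨i, Nat.lt_of_succ_lt h⟩ : Fin n)})}
        {p : Set (Fin n) × Set (Fin n) | ∃ (i : ℕ) (h : i + 1 < n),
          p = ({(⟨i, Nat.lt_of_succ_lt h⟩ : Fin n)}, {(⟨i + 1, h⟩ : Fin n)})} := by
  refine ⟨fun h n => ?_, fun h => hasSOP_of_forall_exists_strictMono T φ fun n =>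
    (exhibitsPattern_sopPattern_iff T φ n).1 (h n)⟩
  obtain ⟨M, b, hb⟩ := (hasSOP_iff_exists_strictMono T φ).1 h
  exact (exhibitsPattern_sopPattern_iff T φ n).2 ⟨M, fun k => b k, hb.comp Fin.val_strictMono⟩

/-- `φ(x;y)` has the strict-order property in the complete theory `T` iff for every
`n < ω` it exhibits the `n`-pattern `(C_n, I_n)` with `C_n = {({i+1}, {i}) : i < n−1}` and
`I_n = {({i}, {i+1}) : i < n−1}`. -/
theorem strict_order_property_iff_exhibits_patterns
    {L : FirstOrder.Language.{u, v}} (T : L.Theory) (hT : T.IsComplete)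
    {α β : Type*} (φ : L.Formula (α ⊕ β)) :
    HasSOP.{u, v, w} T φ ↔
      ∀ n : ℕ, ExhibitsPattern.{u, v, w} T φ
        {p : Set (Fin n) × Set (Fin n) | ∃ (i : ℕ) (h : i + 1 < n),
          p = ({(⟨i + 1, h⟩ : Fin n)}, {(⟨i, Nat.lt_of_succ_lt h⟩ : Fin n)})}
        {p : Set (Fin n) × Set (Fin n) | ∃ (i : ℕ) (h : i + 1 < n),
          p = ({(⟨i, Nat.lt_of_succ_lt h⟩ : Fin n)}, {(⟨i + 1, h⟩ : Fin n)})} :=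
  strict_order_property_iff_exhibits_patterns_general T φ
end

section
/- A partitioned formula φ(x;y) has the tree property of the first kind in a complete first-order theory T if and only if for every n<ω the formula φ exhibits in T the pattern (C_n, I_n) indexed by the finite tree n^{<n} (sequences from n of length <n), where C_n = {({f↾i : i<n}, ∅) : f ∈ n^n} and I_n = {({η, μ}, ∅) : η, μ ∈ n^{<n} incomparable in the tree order}. -/
open FirstOrder Language Set

universe u v w

/-- The finite tree `n^{<n}`: sequences from `n` of length `< n`. -/
def FinTree (n : ℕ) : Type := {l : List (Fin n) // l.length < n}

/-- `φ(x;y)` has the tree property of the first kind in `T`. -/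
def HasTP1 {L : FirstOrder.Language.{u, v}} (T : L.Theory) {α β : Type*}
    (φ : L.Formula (α ⊕ β)) : Prop :=
  ∃ (M : Theory.ModelType.{u, v, w} T) (b : List ℕ → β → M),
    (∀ f : ℕ → ℕ, ∀ m : ℕ, ∃ a : α → M,
      ∀ i < m, φ.Realize (Sum.elim a (b ((List.range i).map f)))) ∧
    (∀ η μ : List ℕ, ¬ η <+: μ → ¬ μ <+: η →
      ¬ ∃ a : α → M, φ.Realize (Sum.elim a (b η)) ∧ φ.Realize (Sum.elim a (b μ)))

/-!
The condition at `n` is exactly the part of the TP₁ conditions that lives on `n^{<n}`, so a TP₁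
tree restricts to a witness of every pattern. Conversely, the witnesses for all `n` glue into a
TP₁ tree in an ultraproduct over a nonprincipal ultrafilter on `ℕ`: by Łoś's theorem each
instance of path consistency or of incomparable inconsistency only has to hold in the factors
indexed by large `n`, where it is one of the conditions of the `n`-th pattern.
-/

theorem List.eventually_length_lt_and_forall_mem_lt (η : List ℕ) :
    ∀ᶠ n in Filter.atTop, η.length < n ∧ ∀ x ∈ η, x < n := by
  filter_upwards [Filter.eventually_gt_atTop (η.length + η.sum)] with n hn
  exact ⟨by omega, fun x hx => by have := List.le_sum_of_mem hx; omega⟩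

namespace FinTree

/-- Reducing the entries mod `n` only serves to make this total; on lists with entries `< n` it
inverts `List.map Fin.val` (`map_val_ofList`). -/
def ofList {n : ℕ} (η : List ℕ) (h : η.length < n) : FinTree n :=
  ⟨η.map fun x => ⟨x % n, Nat.mod_lt x (by omega)⟩, by simpa using h⟩

theorem map_val_ofList {n : ℕ} {η : List ℕ} (h : η.length < n) (hη : ∀ x ∈ η, x < n) :
    (ofList η h).1.map Fin.val = η := by
  simp only [ofList, List.map_map]
  exact List.map_congr_left (fun x hx => Nat.mod_eq_of_lt (hη x hx)) |>.trans (List.map_id η)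

theorem ofList_isPrefix_ofList_iff {n : ℕ} {η μ : List ℕ} (hη : η.length < n)
    (hμ : μ.length < n) (hηx : ∀ x ∈ η, x < n) (hμx : ∀ x ∈ μ, x < n) :
    (ofList η hη).1 <+: (ofList μ hμ).1 ↔ η <+: μ := by
  rw [← List.prefix_map_iff_of_injective Fin.val_injective, map_val_ofList hη hηx,
    map_val_ofList hμ hμx]

theorem ofList_range_map {n i : ℕ} (f : ℕ → ℕ) (h : ((List.range i).map f).length < n) :
    (ofList ((List.range i).map f) h).1 =
      (List.ofFn fun k : Fin n => (⟨f k % n, Nat.mod_lt _ k.pos⟩ : Fin n)).take i := by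
  rw [List.length_map, List.length_range] at h
  apply List.ext_getElem <;> simp [ofList]; omega

theorem map_val_take_ofFn {n : ℕ} (f : Fin n → Fin n) (i : ℕ) :
    ((List.ofFn f).take i).map Fin.val =
      (List.range (min i n)).map fun k => if h : k < n then (f ⟨k, h⟩ : ℕ) else 0 := by
  apply List.ext_getElem
  · simp
  · intro j h1 h2
    simp [show j < n by simp at h1; omega]

end FinTree

namespace FirstOrder.Language.Ultraproduct

variable {L : Language.{u, v}} {ι : Type*} {F : Ultrafilter ι} {M : ι → Type*}
  [∀ i, L.Structure (M i)] [∀ i, Nonempty (M i)]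

theorem realize_sumElim_cast {α β : Type*} (φ : L.Formula (α ⊕ β)) (a : α → ∀ i, M i)
    (b : β → ∀ i, M i) :
    φ.Realize (Sum.elim (fun v => (a v : (F : Filter ι).Product M))
        fun v => (b v : (F : Filter ι).Product M)) ↔
      ∀ᶠ i in (F : Filter ι), φ.Realize (Sum.elim (fun v => a v i) fun v => b v i) := by
  rw [← realize_formula_cast]
  congr! 1
  ext (v | v) <;> rfl

end FirstOrder.Language.Ultraproduct

theorem FirstOrder.Language.Theory.model_ultraproduct {L : FirstOrder.Language.{u, v}}
    (T : L.Theory) {ι : Type*} (F : Ultrafilter ι) (M : ι → T.ModelType) :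
    (F : Filter ι).Product (fun i => M i) ⊨ T :=
  (Theory.model_iff _).2 fun _ hψ => (Ultraproduct.sentence_realize _).2 <|
    .of_forall fun i => T.realize_sentence_of_mem (M := M i) hψ

section TP1

variable {L : FirstOrder.Language.{u, v}} {α β : Type*} (φ : L.Formula (α ⊕ β))

def FinTree.pathConditions (n : ℕ) : Set (Set (FinTree n) × Set (FinTree n)) :=
  {p | ∃ f : Fin n → Fin n, p = ({s : FinTree n | ∃ i : ℕ, s.1 = (List.ofFn f).take i}, ∅)}

def FinTree.incomparableConditions (n : ℕ) : Set (Set (FinTree n) × Set (FinTree n)) :=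
  {p | ∃ η μ : FinTree n, ¬ η.1 <+: μ.1 ∧ ¬ μ.1 <+: η.1 ∧ p = ({η, μ}, ∅)}

def IsTP1TreeUpTo (M : Type*) [L.Structure M] (n : ℕ) (c : List ℕ → β → M) : Prop :=
  (∀ f : ℕ → ℕ, ∃ a : α → M, ∀ i < n, φ.Realize (Sum.elim a (c ((List.range i).map f)))) ∧
    ∀ η μ : List ℕ, η.length < n → μ.length < n → (∀ x ∈ η, x < n) → (∀ x ∈ μ, x < n) →
      ¬ η <+: μ → ¬ μ <+: η →
        ¬ ∃ a : α → M, φ.Realize (Sum.elim a (c η)) ∧ φ.Realize (Sum.elim a (c μ))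

theorem hasTP1_of_forall_isTP1TreeUpTo {T : L.Theory} (M : ℕ → Theory.ModelType.{u, v, w} T)
    (c : ∀ n, List ℕ → β → M n) (hc : ∀ n, IsTP1TreeUpTo φ (M n) n (c n)) :
    HasTP1.{u, v, w} T φ := by
  let F : Ultrafilter ℕ := Filter.hyperfilter ℕ
  let P := (F : Filter ℕ).Product fun n => M n
  have := T.model_ultraproduct F M
  refine ⟨.of T P, fun η v => ((fun n => c n η v : ∀ n, M n) : P),
    fun f m => ?_, fun η μ hημ hμη => ?_⟩
  · choose a ha using fun n => (hc n).1 f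
    refine ⟨fun v => ((fun n => a n v : ∀ n, M n) : P), fun i hi => ?_⟩
    refine (Ultraproduct.realize_sumElim_cast _ _ _).2 ?_
    filter_upwards [Nat.hyperfilter_le_atTop (Filter.eventually_gt_atTop i)] with n hn
    exact ha n i hn
  · rintro ⟨a, haη, haμ⟩
    obtain ⟨a, rfl⟩ := (Quotient.mk_surjective (s := (F : Filter ℕ).productSetoid _)).comp_left a
    have hη := (Ultraproduct.realize_sumElim_cast φ a fun v n => c n η v).1 haη
    have hμ := (Ultraproduct.realize_sumElim_cast φ a fun v n => c n μ v).1 haμ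
    obtain ⟨n, hηn, hμn, ⟨hηl, hηx⟩, hμl, hμx⟩ := (hη.and <| hμ.and <|
      Nat.hyperfilter_le_atTop <| (η.eventually_length_lt_and_forall_mem_lt.and
        μ.eventually_length_lt_and_forall_mem_lt)).exists
    exact (hc n).2 η μ hηl hμl hηx hμx hημ hμη ⟨_, hηn, hμn⟩

theorem exhibitsPattern_of_hasTP1 {T : L.Theory} (n : ℕ) (h : HasTP1.{u, v, w} T φ) :
    ExhibitsPattern.{u, v, w} T φ (FinTree.pathConditions n)
      (FinTree.incomparableConditions n) := by
  obtain ⟨M, b, hpath, hinc⟩ := h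
  refine ⟨M, fun s => b (s.1.map Fin.val), ?_, ?_⟩
  · rintro _ ⟨f, rfl⟩
    obtain ⟨a, ha⟩ := hpath (fun k => if h : k < n then f ⟨k, h⟩ else 0) n
    refine ⟨a, ?_, fun _ => False.elim⟩
    rintro s ⟨i, hs⟩
    have hlen : min i n < n := by simpa [hs] using s.2
    simpa only [hs, FinTree.map_val_take_ofFn] using ha _ hlen
  · rintro _ ⟨η, μ, hημ, hμη, rfl⟩ ⟨a, ha, -⟩
    exact hinc _ _ (mt (List.prefix_map_iff_of_injective Fin.val_injective).1 hημ)
      (mt (List.prefix_map_iff_of_injective Fin.val_injective).1 hμη)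
      ⟨a, ha η (by simp), ha μ (by simp)⟩

theorem exists_isTP1TreeUpTo_of_exhibitsPattern {T : L.Theory} (n : ℕ)
    (h : ExhibitsPattern.{u, v, w} T φ (FinTree.pathConditions n)
      (FinTree.incomparableConditions n)) :
    ∃ (M : Theory.ModelType.{u, v, w} T) (c : List ℕ → β → M), IsTP1TreeUpTo φ M n c := by
  obtain ⟨M, b, hpath, hinc⟩ := h
  refine ⟨M, fun η => if h : η.length < n then b (FinTree.ofList η h) else Classical.arbitrary _,
    fun f => ?_, fun η μ hηl hμl hηx hμx hημ hμη => ?_⟩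
  · obtain ⟨a, ha, -⟩ := hpath _ ⟨fun k => ⟨f k % n, Nat.mod_lt _ k.pos⟩, rfl⟩
    refine ⟨a, fun i hi => ?_⟩
    have hlen : ((List.range i).map f).length < n := by simpa using hi
    simpa only [dif_pos hlen] using ha _ ⟨i, FinTree.ofList_range_map f hlen⟩
  · rintro ⟨a, haη, haμ⟩
    refine hinc _ ⟨FinTree.ofList η hηl, FinTree.ofList μ hμl, ?_, ?_, rfl⟩
      ⟨a, ?_, fun _ => False.elim⟩
    · rwa [FinTree.ofList_isPrefix_ofList_iff hηl hμl hηx hμx]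
    · rwa [FinTree.ofList_isPrefix_ofList_iff hμl hηl hμx hηx]
    · rintro _ (rfl | rfl)
      · simpa only [dif_pos hηl] using haη
      · simpa only [dif_pos hμl] using haμ

end TP1

theorem tree_property_first_kind_iff_exhibits_patterns_general
    {L : FirstOrder.Language.{u, v}} (T : L.Theory)
    {α β : Type*} (φ : L.Formula (α ⊕ β)) :
    HasTP1.{u, v, w} T φ ↔
      ∀ n : ℕ, ExhibitsPattern.{u, v, w} T φ
        {p : Set (FinTree n) × Set (FinTree n) | ∃ f : Fin n → Fin n,
          p = ({s : FinTree n | ∃ i : ℕ, s.1 = (List.ofFn f).take i}, ∅)}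
        {p : Set (FinTree n) × Set (FinTree n) | ∃ η μ : FinTree n,
          ¬ η.1 <+: μ.1 ∧ ¬ μ.1 <+: η.1 ∧ p = ({η, μ}, ∅)} := by
  refine ⟨fun h n => exhibitsPattern_of_hasTP1 φ n h, fun h => ?_⟩
  choose M c hc using fun n => exists_isTP1TreeUpTo_of_exhibitsPattern φ n (h n)
  exact hasTP1_of_forall_isTP1TreeUpTo φ M c hc

/-- `φ(x;y)` has the tree property of the first kind in the complete theory `T`
iff for every `n < ω` it exhibits the pattern `(C_n, I_n)` indexed by the finite tree `n^{<n}`,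
where `C_n` consists of the paths and `I_n` of the pairs of incomparable nodes. -/
theorem tree_property_first_kind_iff_exhibits_patterns
    {L : FirstOrder.Language.{u, v}} (T : L.Theory) (hT : T.IsComplete)
    {α β : Type*} (φ : L.Formula (α ⊕ β)) :
    HasTP1.{u, v, w} T φ ↔
      ∀ n : ℕ, ExhibitsPattern.{u, v, w} T φ
        {p : Set (FinTree n) × Set (FinTree n) | ∃ f : Fin n → Fin n,
          p = ({s : FinTree n | ∃ i : ℕ, s.1 = (List.ofFn f).take i}, ∅)}
        {p : Set (FinTree n) × Set (FinTree n) | ∃ η μ : FinTree n,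
          ¬ η.1 <+: μ.1 ∧ ¬ μ.1 <+: η.1 ∧ p = ({η, μ}, ∅)} :=
  tree_property_first_kind_iff_exhibits_patterns_general T φ
end

section
/- Let B be an infinite atomic Boolean algebra. For b, c, c′ ∈ B let D(b,c,c′) = {a ∈ B : (a is an atom and a ≤ b and c = c′) or (not(a is an atom and a ≤ b) and c ≠ c′)}. Then for every n<ω and every fully complete n-pattern (C,I) there exist elements b_i, c_i, c_i′ ∈ B (i<n) such that, writing D_i = D(b_i, c_i, c_i′): for every (X, n∖X) ∈ C the set ⋂_{i∈X} D_i ∩ ⋂_{j∈n∖X}(B∖D_j) is nonempty, and for every (X, n∖X) ∈ I that set is empty. In particular, every fully complete pattern is exhibitable. -/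
open FirstOrder Language Set

universe u v w

/-- The `n`-pattern `(C, I)` is fully complete: every condition has the form `(X, Xᶜ)`,
`C` is nonempty, and each `(X, Xᶜ)` lies in exactly one of `C` and `I`. -/
def FullyComplete {n : ℕ} (C I : Set (Set (Fin n) × Set (Fin n))) : Prop :=
  (∀ p ∈ C ∪ I, p.2 = p.1ᶜ) ∧ C.Nonempty ∧
    ∀ X : Set (Fin n), Xor' ((X, Xᶜ) ∈ C) ((X, Xᶜ) ∈ I)

/-- The set `D(b, c, c')` of Statement 6. -/
def Dset {B : Type*} [BooleanAlgebra B] (b c c' : B) : Set B :=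
  {a | (IsAtom a ∧ a ≤ b ∧ c = c') ∨ (¬ (IsAtom a ∧ a ≤ b) ∧ c ≠ c')}

/-!
Let `S = {X | (X, Xᶜ) ∈ C}`, fix `X₀ ∈ S`, and attach a distinct atom `g X` to every `X ∈ S`.
Put `b i = ⨆ {g X | X ∈ S, i ∈ X ∆ X₀}`, `c i = ⊥`, and `c' i = ⊥` exactly when `i ∉ X₀`.
Since `a ∈ D(b, c, c')` iff (`a` is an atom below `b`) ↔ `c = c'`, the trace `{i | a ∈ D i}`
of the atom `g X` is `X`, while every other element has trace `X₀`. So the traces are exactly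
the members of `S`, which for a fully complete pattern means that the conditions in `C` are
realized and those in `I` are not. For exhibitability, run this in `Set ℕ`, viewed as a
structure for the single binary relation "is an atom below", in which `D` is definable.
-/

section Traces

variable {M S : Type*}

def RealizesPattern (D : S → Set M) (C I : Set (Set S × Set S)) : Prop :=
  (∀ p ∈ C, ((⋂ i ∈ p.1, D i) ∩ ⋂ j ∈ p.2, (D j)ᶜ).Nonempty) ∧
    ∀ p ∈ I, (⋂ i ∈ p.1, D i) ∩ ⋂ j ∈ p.2, (D j)ᶜ = ∅

lemma inter_iInter_compl_eq_preimage (D : S → Set M) (X : Set S) :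
    (⋂ i ∈ X, D i) ∩ ⋂ j ∈ Xᶜ, (D j)ᶜ = (fun a => {i | a ∈ D i}) ⁻¹' {X} := by
  ext a
  simp only [mem_inter_iff, mem_iInter, mem_compl_iff, mem_preimage, mem_singleton_iff,
    Set.ext_iff, mem_ofPred_eq]
  exact ⟨fun ⟨hX, hXc⟩ i => ⟨fun ha => by_contra fun hi => hXc i hi ha, hX i⟩,
    fun h => ⟨fun i hi => (h i).2 hi, fun j hj ha => hj ((h j).1 ha)⟩⟩

end Traces

namespace FullyComplete

variable {n : ℕ} {C I : Set (Set (Fin n) × Set (Fin n))}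

lemma nonempty_setOf_mem (hfc : FullyComplete C I) : {X | (X, Xᶜ) ∈ C}.Nonempty := by
  obtain ⟨hcompl, ⟨⟨X, Y⟩, hXY⟩, -⟩ := hfc
  obtain rfl : Y = Xᶜ := hcompl _ (Or.inl hXY)
  exact ⟨X, hXY⟩

lemma realizesPattern_of_range_eq {M : Type*} (hfc : FullyComplete C I) {D : Fin n → Set M}
    (h : range (fun a => {i | a ∈ D i}) = {X | (X, Xᶜ) ∈ C}) : RealizesPattern D C I := by
  obtain ⟨hcompl, -, hxor⟩ := hfc
  refine ⟨?_, ?_⟩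
  · rintro ⟨X, Y⟩ hC
    obtain rfl : Y = Xᶜ := hcompl _ (Or.inl hC)
    rwa [inter_iInter_compl_eq_preimage, preimage_singleton_nonempty, h]
  · rintro ⟨X, Y⟩ hI
    obtain rfl : Y = Xᶜ := hcompl _ (Or.inr hI)
    rw [inter_iInter_compl_eq_preimage, preimage_singleton_eq_empty, h]
    exact fun hC => (hxor X).elim (fun hCI => hCI.2 hI) (fun hIC => hIC.2 hC)

end FullyComplete

lemma range_setOf_iff_notMem_eq {M ι : Type*} {S : Set (Set ι)} {X₀ : Set ι} (hX₀ : X₀ ∈ S)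
    {g : Set ι → M} (hg : Function.Injective g) {P : ι → M → Prop}
    (hP : ∀ i a, P i a ↔ ∃ X ∈ S, i ∈ symmDiff X X₀ ∧ a = g X) :
    range (fun a => {i | P i a ↔ i ∉ X₀}) = S := by
  have htrace_image (Y : Set ι) (hY : Y ∈ S) : {i | P i (g Y) ↔ i ∉ X₀} = Y := by
    have hPY (i : ι) : P i (g Y) ↔ i ∈ symmDiff Y X₀ := by
      rw [hP]
      exact ⟨fun ⟨_, _, hi, hYX⟩ => hg hYX ▸ hi, fun hi => ⟨Y, hY, hi, rfl⟩⟩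
    ext i
    rw [mem_ofPred_eq, hPY, Set.mem_symmDiff]
    tauto
  have htrace_other (a : M) (ha : ¬∃ Y ∈ S, a = g Y) : {i | P i a ↔ i ∉ X₀} = X₀ := by
    ext i
    rw [mem_ofPred_eq, hP]
    exact ⟨fun h => by_contra fun hi => ha <| (h.2 hi).imp fun Y ⟨hY, _, haY⟩ => ⟨hY, haY⟩,
      fun hi => ⟨fun ⟨Y, hY, _, haY⟩ => absurd ⟨Y, hY, haY⟩ ha, absurd hi⟩⟩
  refine Subset.antisymm ?_ fun Y hY => ⟨g Y, htrace_image Y hY⟩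
  refine range_subset_iff.2 fun a => ?_
  by_cases ha : ∃ Y ∈ S, a = g Y
  · obtain ⟨Y, hY, rfl⟩ := ha
    rwa [htrace_image Y hY]
  · rwa [htrace_other a ha]

lemma IsAtom.supPrime {α : Type*} [DistribLattice α] [OrderBot α] {a : α} (ha : IsAtom a) :
    SupPrime a :=
  ⟨not_isMin_of_lt ha.bot_lt, fun _ _ h =>
    or_iff_not_imp_right.2 fun hc =>
      Disjoint.left_le_of_le_sup_right h (ha.not_le_iff_disjoint.1 hc)⟩

lemma isAtom_and_le_finset_sup_iff {α ι : Type*} [DistribLattice α] [OrderBot α] {a : α}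
    {s : Finset ι} {g : ι → α} (hg : ∀ i, IsAtom (g i)) :
    IsAtom a ∧ a ≤ s.sup g ↔ ∃ i ∈ s, a = g i := by
  refine ⟨fun ⟨ha, hle⟩ => ?_, fun ⟨i, hi, hai⟩ => hai ▸ ⟨hg i, Finset.le_sup hi⟩⟩
  simpa only [(hg _).le_iff_eq ha.ne_bot] using ha.supPrime.le_finset_sup.1 hle

section AtomicBooleanAlgebra

variable {B : Type*} [BooleanAlgebra B]

lemma mem_Dset_iff {a b c c' : B} : a ∈ Dset b c c' ↔ (IsAtom a ∧ a ≤ b ↔ c = c') := by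
  simp only [Dset, mem_ofPred_eq]
  tauto

variable (B) in
lemma infinite_subtype_isAtom [Infinite B] [IsAtomic B] : Infinite {a : B // IsAtom a} := by
  by_contra hfin
  rw [not_infinite_iff_finite] at hfin
  have := Finite.of_injective (fun x : B => {a : {a : B // IsAtom a} | a.1 ≤ x})
    fun x y hxy => BooleanAlgebra.eq_iff_atom_le_iff.2 fun a ha => Set.ext_iff.1 hxy ⟨a, ha⟩
  exact not_finite B

lemma exists_dset_range_eq [Infinite B] [IsAtomic B] {ι : Type*} [Finite ι]
    {S : Set (Set ι)} (hS : S.Nonempty) :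
    ∃ b c c' : ι → B, range (fun a => {i | a ∈ Dset (b i) (c i) (c' i)}) = S := by
  classical
  obtain ⟨X₀, hX₀⟩ := hS
  have := infinite_subtype_isAtom B
  have := Fintype.ofFinite ι
  let g : Set ι ↪ {a : B // IsAtom a} :=
    (nonempty_embedding_nat (Set ι)).some.trans (Infinite.natEmbedding _)
  let b (i : ι) : B := ({X | X ∈ S ∧ i ∈ symmDiff X X₀} : Finset _).sup fun X => (g X : B)
  refine ⟨b, fun _ => ⊥, fun i => if i ∈ X₀ then ⊤ else ⊥, ?_⟩
  have hb (i : ι) (a : B) : IsAtom a ∧ a ≤ b i ↔ ∃ X ∈ S, i ∈ symmDiff X X₀ ∧ a = g X := by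
    simp only [b, isAtom_and_le_finset_sup_iff fun X => (g X).2, Finset.mem_filter,
      Finset.mem_univ, true_and, and_assoc]
  have hc (i : ι) : ((⊥ : B) = if i ∈ X₀ then ⊤ else ⊥) ↔ i ∉ X₀ := by
    split_ifs with hi <;> simp [hi]
  simp only [mem_Dset_iff, hc]
  exact range_setOf_iff_notMem_eq hX₀ (Subtype.val_injective.comp g.injective) hb

end AtomicBooleanAlgebra

namespace FullyComplete

variable {n : ℕ} {C I : Set (Set (Fin n) × Set (Fin n))}

lemma exists_dset_realizesPattern (hfc : FullyComplete C I) (B : Type*) [BooleanAlgebra B]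
    [Infinite B] [IsAtomic B] :
    ∃ b c c' : Fin n → B, RealizesPattern (fun i => Dset (b i) (c i) (c' i)) C I :=
  (exists_dset_range_eq hfc.nonempty_setOf_mem).imp fun _ =>
    Exists.imp fun _ => Exists.imp fun _ => hfc.realizesPattern_of_range_eq

end FullyComplete

inductive AtomLeSymbol : ℕ → Type
  | atomLe : AtomLeSymbol 2

def atomLeLanguage : FirstOrder.Language.{0, 0} := ⟨fun _ => Empty, AtomLeSymbol⟩

instance atomLeStructure (B : Type*) [BooleanAlgebra B] : atomLeLanguage.Structure B where
  funMap f := Empty.elim f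
  RelMap | .atomLe => fun v => IsAtom (v 0) ∧ v 0 ≤ v 1

def dsetFormula : atomLeLanguage.Formula (Unit ⊕ Fin 3) :=
  (Relations.formula₂ (AtomLeSymbol.atomLe : atomLeLanguage.Relations 2)
      (Term.var (Sum.inl ())) (Term.var (Sum.inr 0))).iff
    (Term.equal (Term.var (Sum.inr 1)) (Term.var (Sum.inr 2)))

lemma realize_dsetFormula {B : Type*} [BooleanAlgebra B] (a : Unit → B) (b : Fin 3 → B) :
    dsetFormula.Realize (Sum.elim a b) ↔ a () ∈ Dset (b 0) (b 1) (b 2) := by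
  rw [mem_Dset_iff]
  simp only [dsetFormula, Formula.realize_iff, Formula.realize_equal, Term.realize_var,
    Sum.elim_inr]
  rfl

lemma exhibitsPattern_completeTheory {L : FirstOrder.Language.{u, v}} (M : Type w)
    [L.Structure M] [Nonempty M] {α β S : Type*} (φ : L.Formula (α ⊕ β)) (b : S → β → M)
    {C I : Set (Set S × Set S)}
    (h : RealizesPattern (fun i => {a : α → M | φ.Realize (Sum.elim a (b i))}) C I) :
    ExhibitsPattern.{u, v, w} (L.completeTheory M) φ C I := by
  refine ⟨.of _ M, b, fun p hp => ?_, fun p hp ⟨a, ha⟩ => ?_⟩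
  · obtain ⟨a, ha, ha'⟩ := h.1 p hp
    exact ⟨a, fun i hi => mem_iInter₂.1 ha i hi, fun j hj => mem_iInter₂.1 ha' j hj⟩
  · exact (h.2 p hp).subset ⟨mem_iInter₂.2 ha.1, mem_iInter₂.2 ha.2⟩

lemma FullyComplete.exhibitable {n : ℕ} {C I : Set (Set (Fin n) × Set (Fin n))}
    (hfc : FullyComplete C I) : Exhibitable C I := by
  obtain ⟨b, c, c', h⟩ := exists_dset_range_eq (B := Set ℕ) hfc.nonempty_setOf_mem
  refine ⟨atomLeLanguage, _, completeTheory.isComplete _ (Set ℕ), Unit, Fin 3, dsetFormula,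
    exhibitsPattern_completeTheory (Set ℕ) dsetFormula (fun i => ![b i, c i, c' i])
      (hfc.realizesPattern_of_range_eq ?_)⟩
  simp only [mem_ofPred_eq, realize_dsetFormula, Matrix.cons_val_zero, Matrix.cons_val_one,
    Matrix.cons_val_two, Matrix.tail_cons, Matrix.head_cons]
  have heval : Function.Surjective fun a : Unit → Set ℕ => a () := fun m => ⟨fun _ => m, rfl⟩
  rw [← h]
  exact heval.range_comp fun x => {i | x ∈ Dset (b i) (c i) (c' i)}

theorem fully_complete_patterns_realized_in_atomic_boolean_algebra_general
    (B : Type*) [BooleanAlgebra B] [Infinite B] [IsAtomic B]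
    (n : ℕ) (C I : Set (Set (Fin n) × Set (Fin n)))
    (hfc : FullyComplete C I) :
    (∃ b c c' : Fin n → B,
      (∀ p ∈ C,
        ((⋂ i ∈ p.1, Dset (b i) (c i) (c' i)) ∩ ⋂ j ∈ p.2, (Dset (b j) (c j) (c' j))ᶜ).Nonempty) ∧
      (∀ p ∈ I,
        (⋂ i ∈ p.1, Dset (b i) (c i) (c' i)) ∩ (⋂ j ∈ p.2, (Dset (b j) (c j) (c' j))ᶜ) = ∅)) ∧
    Exhibitable C I :=
  ⟨hfc.exists_dset_realizesPattern B, hfc.exhibitable⟩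

/-- in an infinite atomic Boolean algebra, every fully complete pattern can be
realized by sets of the form `D(b, c, c')`; in particular every fully complete pattern is
exhibitable. -/
theorem fully_complete_patterns_realized_in_atomic_boolean_algebra
    (B : Type*) [BooleanAlgebra B] [Infinite B] [IsAtomic B]
    (n : ℕ) (C I : Set (Set (Fin n) × Set (Fin n)))
    (hpat : IsPattern C I) (hfc : FullyComplete C I) :
    (∃ b c c' : Fin n → B,
      (∀ p ∈ C,
        ((⋂ i ∈ p.1, Dset (b i) (c i) (c' i)) ∩ ⋂ j ∈ p.2, (Dset (b j) (c j) (c' j))ᶜ).Nonempty) ∧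
      (∀ p ∈ I,
        (⋂ i ∈ p.1, Dset (b i) (c i) (c' i)) ∩ (⋂ j ∈ p.2, (Dset (b j) (c j) (c' j))ᶜ) = ∅)) ∧
    Exhibitable C I :=
  fully_complete_patterns_realized_in_atomic_boolean_algebra_general B n C I hfc
end

section
/- Let T be a complete first-order theory and φ(x;y) a straight up maximal partitioned formula in T. Then φ admits Cooper's property 1^(1): for every n<ω there exist a model M ⊨ T and parameters b_0,…,b_{n−1} ∈ M^y and (b_X)_{X⊆n} from M^y such that the definable sets φ(M;b_i) = {a ∈ M^x : M ⊨ φ(a;b_i)} are nonempty and pairwise disjoint, and for every X ⊆ n, φ(M;b_X) = ⋃_{i∈X} φ(M;b_i). -/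
/-!
Cooper's property `1^(1)` for `n` is a finite pattern on parameters indexed by `𝒫(n)`, the
singleton `{i}` standing for `b_i`: each `{i}` is consistent, two distinct singletons are jointly
inconsistent, `{i} ∧ ¬X` is inconsistent for `i ∈ X`, and `X ∧ ⋀_{i ∈ X} ¬{i}` is inconsistent.
The membership relation between `n` and `𝒫(n)` exhibits this pattern in its complete theory, so
a straight up maximal formula exhibits it as well, once `𝒫(n)` is reindexed by `Fin (2 ^ n)`.
-/

open FirstOrder Language Set

universe u v w

/-- `φ(x;y)` is straight up maximal in `T`: it exhibits every exhibitable pattern. -/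
def StraightUpMaximal {L : FirstOrder.Language.{u, v}} (T : L.Theory) {α β : Type*}
    (φ : L.Formula (α ⊕ β)) : Prop :=
  ∀ (n : ℕ) (C I : Set (Set (Fin n) × Set (Fin n))),
    IsPattern C I → Exhibitable C I → ExhibitsPattern.{u, v, w} T φ C I


def patternImage {S S' : Type*} (f : S → S') (p : Set S × Set S) : Set S' × Set S' :=
  (f '' p.1, f '' p.2)

theorem patternImage_symm_patternImage {S S' : Type*} (e : S ≃ S') (p : Set S × Set S) :
    patternImage e.symm (patternImage e p) = p := by
  simp [patternImage, Equiv.symm_image_image]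

theorem IsPattern.preimage_patternImage {S S' : Type*} {C I : Set (Set S' × Set S')}
    (h : IsPattern C I) (f : S → S') :
    IsPattern (patternImage f ⁻¹' C) (patternImage f ⁻¹' I) := by
  simpa [IsPattern, patternImage] using h

theorem ExhibitsPattern.preimage_patternImage {L : FirstOrder.Language.{u, v}} {T : L.Theory}
    {α β S S' : Type*} {φ : L.Formula (α ⊕ β)} {C I : Set (Set S' × Set S')}
    (h : ExhibitsPattern.{u, v, w} T φ C I) (f : S → S') :
    ExhibitsPattern.{u, v, w} T φ (patternImage f ⁻¹' C) (patternImage f ⁻¹' I) := by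
  obtain ⟨M, b, hC, hI⟩ := h
  exact ⟨M, b ∘ f, fun p hp => by simpa [patternImage] using hC _ hp,
    fun p hp => by simpa [patternImage] using hI _ hp⟩

theorem Exhibitable.preimage_patternImage {S S' : Type*} {C I : Set (Set S' × Set S')}
    (h : Exhibitable C I) (f : S → S') :
    Exhibitable (patternImage f ⁻¹' C) (patternImage f ⁻¹' I) := by
  obtain ⟨L, T, hT, α, β, φ, hφ⟩ := h
  exact ⟨L, T, hT, α, β, φ, hφ.preimage_patternImage f⟩

theorem StraightUpMaximal.exhibitsPattern {L : FirstOrder.Language.{u, v}} {T : L.Theory}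
    {α β S : Type*} [Finite S] {φ : L.Formula (α ⊕ β)} (hφ : StraightUpMaximal.{u, v, w} T φ)
    {C I : Set (Set S × Set S)} (hP : IsPattern C I) (hE : Exhibitable C I) :
    ExhibitsPattern.{u, v, w} T φ C I := by
  obtain ⟨m, ⟨e⟩⟩ := Finite.exists_equiv_fin S
  have h := (hφ m _ _ (hP.preimage_patternImage e.symm) (hE.preimage_patternImage e.symm)
    ).preimage_patternImage e
  simpa only [← Set.preimage_comp, Function.comp_def, patternImage_symm_patternImage,
    Set.preimage_id'] using h

def MembershipGraph (ι : Type*) : Type _ := ι ⊕ Set ι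

namespace MembershipGraph

variable {ι : Type*}

def elt (i : ι) : MembershipGraph ι := Sum.inl i

def set (X : Set ι) : MembershipGraph ι := Sum.inr X

theorem elt_injective : Function.Injective (elt : ι → MembershipGraph ι) :=
  Sum.inl_injective

instance : Nonempty (MembershipGraph ι) := ⟨set ∅⟩

instance : Language.graph.Structure (MembershipGraph ι) where
  RelMap | .adj => fun x => ∃ i X, x 0 = elt i ∧ x 1 = set X ∧ i ∈ X

def memFormula : Language.graph.Formula (Unit ⊕ Unit) :=
  Relations.formula₂ adj (Term.var (Sum.inl ())) (Term.var (Sum.inr ()))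

theorem realize_memFormula (a : Unit → MembershipGraph ι) (X : Set ι) :
    memFormula.Realize (Sum.elim a fun _ => set X) ↔ ∃ i ∈ X, a () = elt i := by
  change (∃ i Y, a () = elt i ∧ set X = set Y ∧ i ∈ Y) ↔ _
  exact ⟨fun ⟨i, _, ha, hXY, hi⟩ => ⟨i, Sum.inr_injective hXY ▸ hi, ha⟩,
    fun ⟨i, hi, ha⟩ => ⟨i, X, ha, rfl, hi⟩⟩

end MembershipGraph

section Cooper

variable {ι : Type*}

variable (ι) in
def cooperConsistent : Set (Set (Set ι) × Set (Set ι)) :=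
  range fun i => ({{i}}, ∅)

variable (ι) in
def cooperInconsistent : Set (Set (Set ι) × Set (Set ι)) :=
  {p | ∃ i j, i ≠ j ∧ p = ({{i}, {j}}, ∅)} ∪ {p | ∃ i X, i ∈ X ∧ p = ({{i}}, {X})} ∪
    range fun X => ({X}, singleton '' X)

theorem isPattern_cooper : IsPattern (cooperConsistent ι) (cooperInconsistent ι) := by
  simp [IsPattern, cooperConsistent, cooperInconsistent, eq_comm (a := (∅ : Set (Set ι))),
    (insert_nonempty _ _).ne_empty]

open MembershipGraph in
theorem exhibitable_cooper (ι : Type) :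
    Exhibitable (cooperConsistent ι) (cooperInconsistent ι) := by
  refine ⟨Language.graph, Language.graph.completeTheory (MembershipGraph ι),
    completeTheory.isComplete _ _, Unit, Unit, memFormula,
    Theory.ModelType.of _ (MembershipGraph ι), fun X _ => set X, ?_, ?_⟩
  · rintro p ⟨i, rfl⟩
    refine ⟨fun _ => elt i, ?_, by simp⟩
    rintro _ rfl
    exact (realize_memFormula _ _).2 ⟨i, rfl, rfl⟩
  · rintro p ((⟨i, j, hij, rfl⟩ | ⟨i, X, hi, rfl⟩) | ⟨X, rfl⟩) ⟨a, hpos, hneg⟩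
    · obtain ⟨_, rfl, hai⟩ := (realize_memFormula a _).1 (hpos {i} (by simp))
      obtain ⟨_, rfl, haj⟩ := (realize_memFormula a _).1 (hpos {j} (by simp))
      exact hij (elt_injective (hai.symm.trans haj))
    · obtain ⟨i, rfl, hai⟩ := (realize_memFormula a _).1 (hpos {i} rfl)
      exact hneg X rfl ((realize_memFormula a _).2 ⟨i, hi, hai⟩)
    · obtain ⟨i, hi, hai⟩ := (realize_memFormula a _).1 (hpos X rfl)
      exact hneg {i} ⟨i, hi, rfl⟩ ((realize_memFormula a _).2 ⟨i, rfl, hai⟩)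

theorem ExhibitsPattern.cooper_one_one {L : FirstOrder.Language.{u, v}} {T : L.Theory}
    {α β : Type*} {φ : L.Formula (α ⊕ β)}
    (h : ExhibitsPattern.{u, v, w} T φ (cooperConsistent ι) (cooperInconsistent ι)) :
    ∃ (M : Theory.ModelType.{u, v, w} T) (b : ι → β → M) (bX : Set ι → β → M),
      (∀ i, {a : α → M | φ.Realize (Sum.elim a (b i))}.Nonempty) ∧
      (∀ i j, i ≠ j →
        {a : α → M | φ.Realize (Sum.elim a (b i))} ∩
          {a : α → M | φ.Realize (Sum.elim a (b j))} = ∅) ∧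
      (∀ X : Set ι,
        {a : α → M | φ.Realize (Sum.elim a (bX X))} =
          ⋃ i ∈ X, {a : α → M | φ.Realize (Sum.elim a (b i))}) := by
  obtain ⟨M, b, hC, hI⟩ := h
  refine ⟨M, fun i => b {i}, b, fun i => ?_, fun i j hij => ?_, fun X => ?_⟩
  · obtain ⟨a, ha, -⟩ := hC _ ⟨i, rfl⟩
    exact ⟨a, ha _ rfl⟩
  · refine eq_empty_of_forall_notMem fun a ⟨hi, hj⟩ => ?_
    exact hI _ (.inl (.inl ⟨i, j, hij, rfl⟩))
      ⟨a, by rintro _ (rfl | rfl); exacts [hi, hj], by simp⟩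
  · ext a
    simp only [mem_ofPred_eq, mem_iUnion]
    constructor
    · intro ha
      by_contra! h
      exact hI _ (.inr ⟨X, rfl⟩) ⟨a, by simpa using ha, by simpa using h⟩
    · rintro ⟨i, hi, ha⟩
      by_contra h
      exact hI _ (.inl (.inr ⟨i, X, hi, rfl⟩)) ⟨a, by simpa using ha, by simpa using h⟩

end Cooper

theorem straightUpMaximal_admits_cooper_one_one_general
    {L : FirstOrder.Language.{u, v}} (T : L.Theory)
    {α β : Type*} (φ : L.Formula (α ⊕ β))
    (hSM : StraightUpMaximal.{u, v, w} T φ) :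
    ∀ n : ℕ,
      ∃ (M : Theory.ModelType.{u, v, w} T) (b : Fin n → β → M)
        (bX : Set (Fin n) → β → M),
        (∀ i : Fin n, {a : α → M | φ.Realize (Sum.elim a (b i))}.Nonempty) ∧
        (∀ i j : Fin n, i ≠ j →
          {a : α → M | φ.Realize (Sum.elim a (b i))} ∩
            {a : α → M | φ.Realize (Sum.elim a (b j))} = ∅) ∧
        (∀ X : Set (Fin n),
          {a : α → M | φ.Realize (Sum.elim a (bX X))} =
            ⋃ i ∈ X, {a : α → M | φ.Realize (Sum.elim a (b i))}) := fun n =>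
  (hSM.exhibitsPattern isPattern_cooper (exhibitable_cooper (Fin n))).cooper_one_one

/-- if `φ(x;y)` is straight up maximal in the complete theory `T`, then `φ`
admits Cooper's property `1^(1)`: for every `n` there are parameters whose `φ`-definable sets
are nonempty and pairwise disjoint, and all unions of them are again `φ`-definable. -/
theorem straightUpMaximal_admits_cooper_one_one
    {L : FirstOrder.Language.{u, v}} (T : L.Theory) (hT : T.IsComplete)
    {α β : Type*} (φ : L.Formula (α ⊕ β))
    (hSM : StraightUpMaximal.{u, v, w} T φ) :
    ∀ n : ℕ,
      ∃ (M : Theory.ModelType.{u, v, w} T) (b : Fin n → β → M)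
        (bX : Set (Fin n) → β → M),
        (∀ i : Fin n, {a : α → M | φ.Realize (Sum.elim a (b i))}.Nonempty) ∧
        (∀ i j : Fin n, i ≠ j →
          {a : α → M | φ.Realize (Sum.elim a (b i))} ∩
            {a : α → M | φ.Realize (Sum.elim a (b j))} = ∅) ∧
        (∀ X : Set (Fin n),
          {a : α → M | φ.Realize (Sum.elim a (bX X))} =
            ⋃ i ∈ X, {a : α → M | φ.Realize (Sum.elim a (b i))}) :=
  straightUpMaximal_admits_cooper_one_one_general T φ hSM
end

section
/- Let B be a Boolean algebra containing a nonzero atomless element, i.e. an element a₀ ≠ 0 such that no atom of B lies below a₀. Then for every n<ω and every reasonable positive n-pattern (C,I) there exist b_0,…,b_{n−1} ∈ B such that: for every (Y,∅) ∈ C there exists a ∈ B with a ≠ 0 and a ≤ b_i for all i ∈ Y, and for every (Z,∅) ∈ I there is no a ∈ B with a ≠ 0 and a ≤ b_i for all i ∈ Z. In particular, every reasonable positive pattern is exhibitable (by the formula x ≠ 0 ∧ x ≤ y in the complete theory of such a B). -/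
open FirstOrder Language Set

universe u v w

/-- `(C, I)` is a positive pattern: every condition has the form `(X, ∅)` with `X` nonempty. -/
def IsPositivePattern {S : Type*} (C I : Set (Set S × Set S)) : Prop :=
  ∀ p ∈ C ∪ I, p.1 ≠ (∅ : Set S) ∧ p.2 = (∅ : Set S)

/-- A positive pattern `(C, I)` is reasonable: no inconsistency condition is contained in a
consistency condition. -/
def IsReasonablePositive {S : Type*} (C I : Set (Set S × Set S)) : Prop :=
  ∀ p ∈ I, ∀ q ∈ C, ¬ p.1 ⊆ q.1

section BA
variable {B : Type*} [BooleanAlgebra B]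

lemma my_split (a₀ : B) (hatomless : ∀ a : B, IsAtom a → ¬ a ≤ a₀)
    (x : B) (hx : x ≠ ⊥) (hxa : x ≤ a₀) :
    ∃ y z : B, y ≠ ⊥ ∧ z ≠ ⊥ ∧ y ≤ x ∧ z ≤ x ∧ Disjoint y z := by
  have hna : ¬ IsAtom x := fun h => hatomless x h hxa
  rw [IsAtom] at hna
  push_neg at hna
  obtain ⟨y, hyx, hy⟩ := hna hx
  refine ⟨y, x \ y, hy, ?_, hyx.le, sdiff_le, disjoint_sdiff_self_right⟩
  intro h
  exact hyx.not_ge (sdiff_eq_bot_iff.mp h)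

lemma my_family (a₀ : B) (hatomless : ∀ a : B, IsAtom a → ¬ a ≤ a₀) :
    ∀ (k : ℕ) (x : B), x ≠ ⊥ → x ≤ a₀ →
      ∃ f : Fin k → B, (∀ i, f i ≠ ⊥) ∧ (∀ i, f i ≤ x) ∧
        ∀ i j, i ≠ j → Disjoint (f i) (f j) := by
  intro k
  induction k with
  | zero => exact fun x hx _ => ⟨Fin.elim0, fun i => i.elim0, fun i => i.elim0, fun i => i.elim0⟩
  | succ k ih =>
    intro x hx hxa
    obtain ⟨y, z, hy, hz, hyx, hzx, hyz⟩ := my_split a₀ hatomless x hx hxa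
    obtain ⟨f, hf1, hf2, hf3⟩ := ih y hy (hyx.trans hxa)
    refine ⟨Fin.cons z f, ?_, ?_, ?_⟩
    · intro i
      induction i using Fin.cases with
      | zero => simpa using hz
      | succ i => simpa using hf1 i
    · intro i
      induction i using Fin.cases with
      | zero => simpa using hzx
      | succ i => simpa using (hf2 i).trans hyx
    · intro i j hij
      induction i using Fin.cases with
      | zero =>
        induction j using Fin.cases with
        | zero => exact absurd rfl hij
        | succ j => simpa using hyz.symm.mono_right (hf2 j)
      | succ i =>
        induction j using Fin.cases with
        | zero => simpa using (hyz.symm.mono_right (hf2 i)).symm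
        | succ j =>
          simp only [Fin.cons_succ]
          exact hf3 i j (fun h => hij (by rw [h]))
end BA


theorem pattern_ba_part
    (B : Type*) [BooleanAlgebra B] (a₀ : B) (ha₀ : a₀ ≠ ⊥)
    (hatomless : ∀ a : B, IsAtom a → ¬ a ≤ a₀)
    (n : ℕ) (C I : Set (Set (Fin n) × Set (Fin n)))
    (hpos : IsPositivePattern C I) (hreas : IsReasonablePositive C I) :
    ∃ b : Fin n → B,
      (∀ p ∈ C, ∃ a : B, a ≠ ⊥ ∧ ∀ i ∈ p.1, a ≤ b i) ∧
      (∀ p ∈ I, ¬ ∃ a : B, a ≠ ⊥ ∧ ∀ i ∈ p.1, a ≤ b i) := by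
  classical
  obtain ⟨f, hf1, hf2, hf3⟩ :=
    my_family a₀ hatomless (Fintype.card (Set (Fin n))) a₀ ha₀ le_rfl
  set e := Fintype.equivFin (Set (Fin n)) with he
  set c : Set (Fin n) → B := fun Y => f (e Y) with hc
  have hc1 : ∀ Y, c Y ≠ ⊥ := fun Y => hf1 _
  have hc3 : ∀ Y Y', Y ≠ Y' → Disjoint (c Y) (c Y') :=
    fun Y Y' h => hf3 _ _ (fun hh => h (e.injective hh))
  set t : Fin n → Finset (Set (Fin n)) :=
    fun i => Finset.univ.filter (fun Y => (Y, (∅ : Set (Fin n))) ∈ C ∧ i ∈ Y) with ht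
  have hmem : ∀ (i : Fin n) (Y : Set (Fin n)),
      Y ∈ t i ↔ (Y, (∅ : Set (Fin n))) ∈ C ∧ i ∈ Y := by
    intro i Y; simp [ht]
  have key : ∀ (x : B) (Y : Set (Fin n)) (s : Finset (Set (Fin n))),
      x ≤ c Y → Y ∉ s → x ≤ s.sup c → x = ⊥ := by
    intro x Y s hxc hYs hxs
    have h1 : x = x ⊓ s.sup c := left_eq_inf.mpr hxs
    rw [Finset.sup_inf_distrib_left] at h1
    rw [h1]
    refine le_bot_iff.mp (Finset.sup_le fun Y' hY' => ?_)
    have hne : Y ≠ Y' := fun h => hYs (h ▸ hY')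
    exact le_trans (inf_le_inf_right _ hxc) (disjoint_iff.mp (hc3 Y Y' hne)).le
  refine ⟨fun i => (t i).sup c, ?_, ?_⟩
  · intro p hp
    obtain ⟨hne1, he2⟩ := hpos p (Set.mem_union_left _ hp)
    have hpC : (p.1, (∅ : Set (Fin n))) ∈ C := by rw [← he2, Prod.mk.eta]; exact hp
    exact ⟨c p.1, hc1 _, fun i hi => Finset.le_sup ((hmem i p.1).mpr ⟨hpC, hi⟩)⟩
  · rintro p hp ⟨a, hane, hale⟩
    obtain ⟨hne1, he2⟩ := hpos p (Set.mem_union_right _ hp)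
    obtain ⟨i0, hi0⟩ := Set.nonempty_iff_ne_empty.mpr hne1
    have h0 : a ≤ (t i0).sup c := hale i0 hi0
    have h1 : a = (t i0).sup (fun Y => a ⊓ c Y) := by
      rw [← Finset.sup_inf_distrib_left]; exact left_eq_inf.mpr h0
    have h2 : ∃ Y ∈ t i0, a ⊓ c Y ≠ ⊥ := by
      by_contra h
      push_neg at h
      apply hane
      rw [h1]
      exact le_bot_iff.mp (Finset.sup_le fun Y hY => (h Y hY).le)
    obtain ⟨Y, hYt, hYne⟩ := h2
    obtain ⟨hYC, hi0Y⟩ := (hmem i0 Y).mp hYt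
    have hns : ¬ p.1 ⊆ Y := hreas p hp (Y, ∅) hYC
    obtain ⟨j, hjp, hjY⟩ := Set.not_subset.mp hns
    have hYtj : Y ∉ t j := fun h => hjY ((hmem j Y).mp h).2
    exact hYne (key (a ⊓ c Y) Y (t j) inf_le_right hYtj
      (le_trans inf_le_left (hale j hjp)))

/-- The relation used to exhibit a reasonable positive pattern. -/
def patRel (n : ℕ) (C : Set (Set (Fin n) × Set (Fin n)))
    (x y : Set (Fin n) ⊕ Fin n) : Prop :=
  ∃ (Y : Set (Fin n)) (i : Fin n), x = Sum.inl Y ∧ y = Sum.inr i ∧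
    (Y, (∅ : Set (Fin n))) ∈ C ∧ i ∈ Y

/-- The graph-language structure used to exhibit a reasonable positive pattern. -/
def patStructure (n : ℕ) (C : Set (Set (Fin n) × Set (Fin n))) :
    Language.graph.Structure (Set (Fin n) ⊕ Fin n) where
  funMap := fun {_} f => f.elim
  RelMap := fun {k} r => match k, r with
    | 2, .adj => fun v => patRel n C (v 0) (v 1)

lemma patStructure_realize (n : ℕ) (C : Set (Set (Fin n) × Set (Fin n)))
    (v : Unit ⊕ Unit → Set (Fin n) ⊕ Fin n) :
    letI := patStructure n C
    (Formula.Realize (M := Set (Fin n) ⊕ Fin n)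
      (adj.formula₂ (Term.var (Sum.inl ())) (Term.var (Sum.inr ()))) v) ↔
      patRel n C (v (Sum.inl ())) (v (Sum.inr ())) := by
  letI := patStructure n C
  rw [Formula.realize_rel₂]
  simp only [Term.realize_var]
  rfl

theorem pattern_exh_part (n : ℕ) (C I : Set (Set (Fin n) × Set (Fin n)))
    (hpos : IsPositivePattern C I) (hreas : IsReasonablePositive C I) :
    Exhibitable C I := by
  classical
  letI strM := patStructure n C
  haveI : Nonempty (Set (Fin n) ⊕ Fin n) := ⟨Sum.inl ∅⟩
  refine ⟨Language.graph, Language.graph.completeTheory (Set (Fin n) ⊕ Fin n),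
    completeTheory.isComplete _ _, Unit, Unit,
    adj.formula₂ (Term.var (Sum.inl ())) (Term.var (Sum.inr ())),
    Theory.ModelType.of _ (Set (Fin n) ⊕ Fin n), fun i _ => Sum.inr i, ?_, ?_⟩
  · intro p hp
    obtain ⟨hne1, he2⟩ := hpos p (Set.mem_union_left _ hp)
    have hpC : (p.1, (∅ : Set (Fin n))) ∈ C := by rw [← he2, Prod.mk.eta]; exact hp
    refine ⟨fun _ => Sum.inl p.1, fun i hi => ?_, fun j hj => by simp [he2] at hj⟩
    exact (patStructure_realize n C _).mpr ⟨p.1, i, rfl, rfl, hpC, hi⟩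
  · rintro p hp ⟨a, ha, -⟩
    obtain ⟨hne1, he2⟩ := hpos p (Set.mem_union_right _ hp)
    obtain ⟨i0, hi0⟩ := Set.nonempty_iff_ne_empty.mpr hne1
    obtain ⟨Y, i, hxY, -, hYC, -⟩ := (patStructure_realize n C _).mp (ha i0 hi0)
    have hsub : p.1 ⊆ Y := by
      intro j hj
      obtain ⟨Y', j', hxY', hj', hYC', hj'Y'⟩ := (patStructure_realize n C _).mp (ha j hj)
      have h1 : Y' = Y := Sum.inl.inj (hxY'.symm.trans hxY)
      have h2 : j' = j := (Sum.inr.inj hj').symm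
      rw [← h1, ← h2]; exact hj'Y'
    exact hreas p hp (Y, ∅) hYC hsub

/-- in a Boolean algebra with a nonzero atomless element, every reasonable
positive pattern is realized by the sets of nonzero elements below the parameters; in
particular every reasonable positive pattern is exhibitable. -/
theorem reasonable_positive_patterns_realized_in_boolean_algebra
    (B : Type*) [BooleanAlgebra B] (a₀ : B) (ha₀ : a₀ ≠ ⊥)
    (hatomless : ∀ a : B, IsAtom a → ¬ a ≤ a₀)
    (n : ℕ) (C I : Set (Set (Fin n) × Set (Fin n)))
    (hpos : IsPositivePattern C I) (hreas : IsReasonablePositive C I) :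
    (∃ b : Fin n → B,
      (∀ p ∈ C, ∃ a : B, a ≠ ⊥ ∧ ∀ i ∈ p.1, a ≤ b i) ∧
      (∀ p ∈ I, ¬ ∃ a : B, a ≠ ⊥ ∧ ∀ i ∈ p.1, a ≤ b i)) ∧
    Exhibitable C I :=
  ⟨pattern_ba_part B a₀ ha₀ hatomless n C I hpos hreas,
   pattern_exh_part n C I hpos hreas⟩
end

section
/- Let T be a complete first-order theory. A partitioned formula φ(x;y) is positive maximal in T if and only if for every n<ω there exist a model M ⊨ T and parameters (b_X)_{X⊆n} from M^y such that for every nonempty family Z ⊆ 𝒫(n): M ⊨ ∃x ⋀_{Y∈Z} φ(x;b_Y) if and only if ⋂Z ≠ ∅. -/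
open FirstOrder Language Set

universe u v w

/-- `φ(x;y)` is positive maximal (PM) in `T`: it exhibits every reasonable positive pattern. -/
def IsPM {L : FirstOrder.Language.{u, v}} (T : L.Theory) {α β : Type*}
    (φ : L.Formula (α ⊕ β)) : Prop :=
  ∀ (n : ℕ) (C I : Set (Set (Fin n) × Set (Fin n))),
    IsPositivePattern C I → IsReasonablePositive C I →
      ExhibitsPattern.{u, v, w} T φ C I

/-- `φ(x;y)` is positive maximal in the complete theory `T` iff for every `n`
there are parameters `(b_X)_{X ⊆ n}` such that a family of instances `{φ(x; b_Y) : Y ∈ Z}` is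
consistent exactly when `⋂ Z ≠ ∅`. -/
theorem positive_maximal_iff_intersection_characterization
    {L : FirstOrder.Language.{u, v}} (T : L.Theory) (hT : T.IsComplete)
    {α β : Type*} (φ : L.Formula (α ⊕ β)) :
    IsPM.{u, v, w} T φ ↔
      ∀ n : ℕ,
        ∃ (M : Theory.ModelType.{u, v, w} T) (b : Set (Fin n) → β → M),
          ∀ Z : Set (Set (Fin n)), Z.Nonempty →
            ((∃ a : α → M, ∀ Y ∈ Z, φ.Realize (Sum.elim a (b Y))) ↔ ⋂₀ Z ≠ ∅) := by
  constructor
  · -- forward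
    intro hPM n
    set e : Set (Fin n) ≃ Fin (Fintype.card (Set (Fin n))) := Fintype.equivFin _ with he
    set m := Fintype.card (Set (Fin n))
    let C : Set (Set (Fin m) × Set (Fin m)) :=
      { p | ∃ Z : Set (Set (Fin n)), Z.Nonempty ∧ ⋂₀ Z ≠ ∅ ∧ p = (e '' Z, ∅) }
    let I : Set (Set (Fin m) × Set (Fin m)) :=
      { p | ∃ Z : Set (Set (Fin n)), Z.Nonempty ∧ ⋂₀ Z = ∅ ∧ p = (e '' Z, ∅) }
    have hpos : IsPositivePattern C I := by
      rintro p (⟨Z, hZ, -, rfl⟩ | ⟨Z, hZ, -, rfl⟩) <;>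
        exact ⟨(hZ.image e).ne_empty, rfl⟩
    have hreas : IsReasonablePositive C I := by
      rintro p ⟨Z, hZ, hZe, rfl⟩ q ⟨W, hW, hWe, rfl⟩ hsub
      have hZW : Z ⊆ W := by
        intro Y hY
        obtain ⟨Y', hY', hYY'⟩ := hsub ⟨Y, hY, rfl⟩
        rwa [show Y = Y' from e.injective hYY'.symm]
      exact hWe (Set.eq_empty_of_subset_empty (hZe ▸ Set.sInter_subset_sInter hZW))
    obtain ⟨M, b, hC, hI⟩ := hPM m C I hpos hreas
    refine ⟨M, fun X => b (e X), fun Z hZ => ?_⟩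
    constructor
    · rintro ⟨a, ha⟩ hZe
      refine hI (e '' Z, ∅) ⟨Z, hZ, hZe, rfl⟩ ⟨a, ?_, by simp⟩
      rintro i ⟨Y, hY, rfl⟩
      exact ha Y hY
    · intro hZe
      obtain ⟨a, ha, -⟩ := hC (e '' Z, ∅) ⟨Z, hZ, hZe, rfl⟩
      exact ⟨a, fun Y hY => ha (e Y) ⟨Y, hY, rfl⟩⟩
  · -- backward
    intro h n C I hpos hreas
    set e : Set (Fin n) ≃ Fin (Fintype.card (Set (Fin n))) := Fintype.equivFin _ with he
    set m := Fintype.card (Set (Fin n))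
    obtain ⟨M, b, hb⟩ := h m
    let S : Fin n → Set (Fin m) := fun i => e '' { A | (A, ∅) ∈ C ∧ i ∈ A }
    have hIint : ∀ p ∈ I, ⋂₀ (S '' p.1) = ∅ := by
      intro p hp
      by_contra hne
      obtain ⟨q, hq⟩ := Set.nonempty_iff_ne_empty.mpr hne
      obtain ⟨i₀, hi₀⟩ := Set.nonempty_iff_ne_empty.mpr (hpos p (Or.inr hp)).1
      obtain ⟨A₀, ⟨hA₀C, -⟩, hqA₀⟩ := hq (S i₀) ⟨i₀, hi₀, rfl⟩
      refine hreas p hp (A₀, ∅) hA₀C fun i hi => ?_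
      obtain ⟨A, ⟨-, hiA⟩, hqA⟩ := hq (S i) ⟨i, hi, rfl⟩
      rwa [show A₀ = A from e.injective (hqA₀.symm ▸ hqA.symm ▸ rfl)]
    refine ⟨M, fun i => b (S i), ?_, ?_⟩
    · intro p hp
      have h1 := (hpos p (Or.inl hp)).1
      have h2 := (hpos p (Or.inl hp)).2
      have hp' : (p.1, (∅ : Set (Fin n))) ∈ C := by rwa [← h2, Prod.mk.eta]
      have hint : ⋂₀ (S '' p.1) ≠ ∅ := by
        refine Set.nonempty_iff_ne_empty.mp ⟨e p.1, ?_⟩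
        rintro Y ⟨i, hi, rfl⟩
        exact ⟨p.1, ⟨hp', hi⟩, rfl⟩
      have hZne : (S '' p.1).Nonempty :=
        (Set.nonempty_iff_ne_empty.mpr h1).image S
      obtain ⟨a, ha⟩ := (hb (S '' p.1) hZne).mpr hint
      refine ⟨a, fun i hi => ha (S i) ⟨i, hi, rfl⟩, fun j hj => absurd (h2 ▸ hj) (by simp)⟩
    · rintro p hp ⟨a, ha1, -⟩
      have h1 := (hpos p (Or.inr hp)).1
      have hZne : (S '' p.1).Nonempty :=
        (Set.nonempty_iff_ne_empty.mpr h1).image S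
      exact (hb (S '' p.1) hZne).mp
        ⟨a, by rintro Y ⟨i, hi, rfl⟩; exact ha1 i hi⟩ (hIint p hp)
end

section
/- Let T be a complete first-order theory. If a partitioned formula φ(x;y) is positive maximal in T, then φ(x;y) is consistency maximal in T. -/
open FirstOrder Language Set

universe u v w

/-- `φ(x;y)` is consistency maximal (CM) in `T`: it exhibits every reasonable pattern with no
inconsistency conditions. -/
def IsCM {L : FirstOrder.Language.{u, v}} (T : L.Theory) {α β : Type*}
    (φ : L.Formula (α ⊕ β)) : Prop :=
  ∀ (n : ℕ) (C : Set (Set (Fin n) × Set (Fin n))),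
    ((∅ : Set (Fin n)), (∅ : Set (Fin n))) ∉ C →
    (∀ p ∈ C, p.1 ∩ p.2 = ∅) →
      ExhibitsPattern.{u, v, w} T φ C (∅ : Set (Set (Fin n) × Set (Fin n)))

/-- if `φ(x;y)` is positive maximal in the complete theory `T`, then it is
consistency maximal in `T`. -/
theorem positive_maximal_implies_consistency_maximal
    {L : FirstOrder.Language.{u, v}} (T : L.Theory) (hT : T.IsComplete)
    {α β : Type*} (φ : L.Formula (α ⊕ β))
    (hPM : IsPM.{u, v, w} T φ) : IsCM.{u, v, w} T φ := by
  intro n C hC0 hdisj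
  classical
  set f : Fin n → Fin (n + n) := fun i => i.castAdd n with hf
  set g : Fin n → Fin (n + n) := fun i => i.addNat n with hg
  have hfg : ∀ i j : Fin n, f i ≠ g j := by
    intro i j h
    have h1 : (i : ℕ) = (j : ℕ) + n := by
      have := congrArg Fin.val h
      simpa [f, g] using this
    have := i.isLt
    omega
  have hfinj : ∀ i j : Fin n, f i = f j → i = j := by
    intro i j h
    have h1 := congrArg Fin.val h
    exact Fin.ext (by simpa [f] using h1)
  have hginj : ∀ i j : Fin n, g i = g j → i = j := by
    intro i j h
    have h1 : (i : ℕ) + n = (j : ℕ) + n := by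
      have := congrArg Fin.val h
      simpa [g] using this
    exact Fin.ext (by omega)
  set C' : Set (Set (Fin (n + n)) × Set (Fin (n + n))) :=
    (fun p : Set (Fin n) × Set (Fin n) =>
      (f '' p.1 ∪ g '' p.2, (∅ : Set (Fin (n + n))))) '' C with hC'
  set I' : Set (Set (Fin (n + n)) × Set (Fin (n + n))) :=
    (fun i : Fin n => ({f i, g i}, (∅ : Set (Fin (n + n))))) '' Set.univ with hI'
  have hpos : IsPositivePattern C' I' := by
    rintro q (⟨p, hp, rfl⟩ | ⟨i, -, rfl⟩)
    · refine ⟨?_, rfl⟩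
      intro h0
      have h : f '' p.1 ∪ g '' p.2 = ∅ := h0
      have h1 : p.1 = ∅ := by
        ext i
        simp only [Set.mem_empty_iff_false, iff_false]
        intro hi
        have : f i ∈ f '' p.1 ∪ g '' p.2 := Or.inl ⟨i, hi, rfl⟩
        rw [h] at this
        exact this
      have h2 : p.2 = ∅ := by
        ext i
        simp only [Set.mem_empty_iff_false, iff_false]
        intro hi
        have : g i ∈ f '' p.1 ∪ g '' p.2 := Or.inr ⟨i, hi, rfl⟩
        rw [h] at this
        exact this
      obtain ⟨p1, p2⟩ := p
      simp only at h1 h2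
      subst h1; subst h2
      exact hC0 hp
    · refine ⟨?_, rfl⟩
      intro h0
      have h : ({f i, g i} : Set (Fin (n + n))) = ∅ := h0
      have : f i ∈ ({f i, g i} : Set (Fin (n + n))) := Or.inl rfl
      rw [h] at this
      exact this
  have hreas : IsReasonablePositive C' I' := by
    rintro q ⟨i, -, rfl⟩ q' ⟨p, hp, rfl⟩ hsub
    have hfi : f i ∈ f '' p.1 ∪ g '' p.2 := hsub (Or.inl rfl)
    have hgi : g i ∈ f '' p.1 ∪ g '' p.2 := hsub (Or.inr rfl)
    have hi1 : i ∈ p.1 := by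
      rcases hfi with ⟨j, hj, hji⟩ | ⟨j, hj, hji⟩
      · rw [← hfinj j i hji]; exact hj
      · exact absurd hji.symm (hfg i j)
    have hi2 : i ∈ p.2 := by
      rcases hgi with ⟨j, hj, hji⟩ | ⟨j, hj, hji⟩
      · exact absurd hji (hfg j i)
      · rw [← hginj j i hji]; exact hj
    have : i ∈ p.1 ∩ p.2 := ⟨hi1, hi2⟩
    rw [hdisj p hp] at this
    exact this
  obtain ⟨M, b, hCC, hII⟩ := hPM (n + n) C' I' hpos hreas
  refine ⟨M, fun i => b (f i), ?_, by simp⟩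
  intro p hp
  obtain ⟨a, ha, -⟩ := hCC (f '' p.1 ∪ g '' p.2, ∅) ⟨p, hp, rfl⟩
  refine ⟨a, ?_, ?_⟩
  · intro i hi
    exact ha (f i) (Or.inl ⟨i, hi, rfl⟩)
  · intro j hj hcon
    apply hII ({f j, g j}, ∅) ⟨j, Set.mem_univ j, rfl⟩
    refine ⟨a, ?_, fun k hk => hk.elim⟩
    intro k hk
    rcases hk with rfl | rfl
    · exact hcon
    · exact ha (g j) (Or.inr ⟨j, hj, rfl⟩)
end

section
/- Let T be a complete first-order theory and φ(x;y) a partitioned formula. Then φ(x;y) is consistency maximal in T if and only if φ(x;y) has the independence property in T. -/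
/-!
IP → CM: with an independent family `φ(a_i; b_I)` indexed by `ℕ` and `𝒫(ℕ)`, number the
conditions `p = (A⁺, A⁻)` injectively by `f p ∈ ℕ` and take `b'_i := b_{{f p | i ∈ A⁺}}`; then
`a_{f p}` satisfies `φ(x; b'_i)` exactly for `i ∈ A⁺`, hence realises `p` as `A⁺ ∩ A⁻ = ∅`.

CM → IP: the reasonable pattern `{({J | i ∈ J}, {J | i ∉ J}) | i < n}` on the `2ⁿ` parameters
`b_J`, `J ⊆ n`, is a finite IP configuration of length `n`; a nonprincipal ultraproduct of
these configurations is an infinite one by Łoś's theorem.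
-/

open FirstOrder Language Set

universe u v w

/-- `φ(x;y)` has the independence property in `T`. -/
def HasIP {L : FirstOrder.Language.{u, v}} (T : L.Theory) {α β : Type*}
    (φ : L.Formula (α ⊕ β)) : Prop :=
  ∃ (M : Theory.ModelType.{u, v, w} T) (a : ℕ → α → M) (b : Set ℕ → β → M),
    ∀ (i : ℕ) (I : Set ℕ), φ.Realize (Sum.elim (a i) (b I)) ↔ i ∈ I

theorem FirstOrder.Language.Ultraproduct.model {ι : Type*} (𝒰 : Ultrafilter ι)
    {L : FirstOrder.Language.{u, v}} (T : L.Theory) (M : ι → Theory.ModelType.{u, v, w} T) :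
    T.Model ((𝒰 : Filter ι).Product fun i => M i) where
  realize_of_mem ψ hψ := (Ultraproduct.sentence_realize ψ).2 <|
    Filter.Eventually.of_forall fun i => (M i).is_model.realize_of_mem ψ hψ

section

variable {L : FirstOrder.Language.{u, v}} {T : L.Theory} {α β : Type*} {φ : L.Formula (α ⊕ β)}

theorem ExhibitsPattern.of_image {S S' : Type*} (f : S → S') {C : Set (Set S × Set S)}
    (h : ExhibitsPattern.{u, v, w} T φ (Prod.map (f '' ·) (f '' ·) '' C)
      (∅ : Set (Set S' × Set S'))) :
    ExhibitsPattern.{u, v, w} T φ C (∅ : Set (Set S × Set S)) := by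
  obtain ⟨M, b, hC, -⟩ := h
  refine ⟨M, b ∘ f, fun p hp => ?_, by simp⟩
  obtain ⟨a, hpos, hneg⟩ := hC _ (mem_image_of_mem _ hp)
  exact ⟨a, fun i hi => hpos _ (mem_image_of_mem f hi), fun j hj => hneg _ (mem_image_of_mem f hj)⟩

theorem IsCM.exhibitsPattern {S : Type*} [Finite S] (hCM : IsCM.{u, v, w} T φ)
    {C : Set (Set S × Set S)} (hC0 : ((∅ : Set S), (∅ : Set S)) ∉ C)
    (hdisj : ∀ p ∈ C, p.1 ∩ p.2 = ∅) :
    ExhibitsPattern.{u, v, w} T φ C (∅ : Set (Set S × Set S)) := by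
  obtain ⟨n, ⟨e⟩⟩ := Finite.exists_equiv_fin S
  refine .of_image e (hCM n _ ?_ ?_)
  · rintro ⟨⟨p₁, p₂⟩, hp, hp0⟩
    simp only [Prod.map, Prod.mk.injEq, image_eq_empty] at hp0
    obtain ⟨rfl, rfl⟩ := hp0
    exact hC0 hp
  · rintro _ ⟨p, hp, rfl⟩
    simp [← image_inter e.injective, hdisj p hp]

theorem IsCM.exists_realize_iff_mem {ι : Type*} [Finite ι] (hCM : IsCM.{u, v, w} T φ) :
    ∃ (M : Theory.ModelType.{u, v, w} T) (a : ι → α → M) (b : Set ι → β → M),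
      ∀ i J, φ.Realize (Sum.elim (a i) (b J)) ↔ i ∈ J := by
  let C : Set (Set (Set ι) × Set (Set ι)) := range fun i => ({J | i ∈ J}, {J | i ∉ J})
  have hC0 : ((∅ : Set (Set ι)), (∅ : Set (Set ι))) ∉ C := by
    rintro ⟨i, hi⟩
    exact eq_empty_iff_forall_notMem.1 (congrArg Prod.fst hi) univ (mem_univ i)
  have hdisj : ∀ p ∈ C, p.1 ∩ p.2 = ∅ := by
    rintro _ ⟨i, rfl⟩
    ext J
    simp
  obtain ⟨M, b, hC, -⟩ := hCM.exhibitsPattern hC0 hdisj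
  choose a hpos hneg using fun i => hC _ (mem_range_self i)
  exact ⟨M, a, b, fun i J => ⟨fun h => not_not.1 fun hJ => hneg i J hJ h, hpos i J⟩⟩

theorem IsCM.exists_realize_iff_mem_of_lt (hCM : IsCM.{u, v, w} T φ) (n : ℕ) :
    ∃ (M : Theory.ModelType.{u, v, w} T) (a : ℕ → α → M) (b : Set ℕ → β → M),
      ∀ i < n, ∀ I, φ.Realize (Sum.elim (a i) (b I)) ↔ i ∈ I := by
  obtain ⟨M, a, b, hab⟩ := hCM.exists_realize_iff_mem (ι := Fin n)
  refine ⟨M, Function.extend Fin.val a fun _ _ => Classical.arbitrary M,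
    fun I => b (Fin.val ⁻¹' I), fun i hi I => ?_⟩
  change φ.Realize (Sum.elim (Function.extend Fin.val a _ (⟨i, hi⟩ : Fin n)) _) ↔ _
  rw [Fin.val_injective.extend_apply]
  exact hab ⟨i, hi⟩ _

theorem hasIP_of_forall_lt
    (h : ∀ n : ℕ, ∃ (M : Theory.ModelType.{u, v, w} T) (a : ℕ → α → M) (b : Set ℕ → β → M),
      ∀ i < n, ∀ I, φ.Realize (Sum.elim (a i) (b I)) ↔ i ∈ I) :
    HasIP.{u, v, w} T φ := by
  choose M a b hab using h
  let 𝒰 : Ultrafilter ℕ := .of Filter.atTop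
  let N := (𝒰 : Filter ℕ).Product fun n => M n
  have : T.Model N := Ultraproduct.model 𝒰 T M
  refine ⟨Theory.ModelType.of T N, fun i x => (fun n => a n i x : N),
    fun I y => (fun n => b n I y : N), fun i I => ?_⟩
  have hlos : φ.Realize (Sum.elim (fun x => (fun n => a n i x : N)) fun y => (fun n => b n I y : N))
      ↔ ∀ᶠ n in (𝒰 : Filter ℕ), φ.Realize (Sum.elim (a n i) (b n I)) := by
    have hcoord : ∀ n, (fun s => Sum.elim (fun x n => a n i x) (fun y n => b n I y) s n) =
        Sum.elim (a n i) (b n I) := fun n => by ext (_ | _) <;> rfl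
    simp only [← hcoord]
    convert Ultraproduct.realize_formula_cast φ (Sum.elim (fun x n => a n i x) fun y n => b n I y)
      using 2
    ext (_ | _) <;> rfl
  have hlarge : ∀ᶠ n in (𝒰 : Filter ℕ), i < n :=
    Ultrafilter.of_le Filter.atTop (Filter.eventually_gt_atTop i)
  refine hlos.trans ?_
  rw [Filter.eventually_congr (hlarge.mono fun n hn => hab n i hn I), Filter.eventually_const]

theorem HasIP.exists_realize_iff {ι S : Type*} [Countable ι] (h : HasIP.{u, v, w} T φ)
    (R : ι → S → Prop) :
    ∃ (M : Theory.ModelType.{u, v, w} T) (a : ι → α → M) (b : S → β → M),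
      ∀ k s, φ.Realize (Sum.elim (a k) (b s)) ↔ R k s := by
  obtain ⟨M, a, b, hab⟩ := h
  obtain ⟨f, hf⟩ := exists_injective_nat ι
  exact ⟨M, a ∘ f, fun s => b (f '' {k | R k s}), fun k s => (hab _ _).trans (hf.mem_set_image)⟩

theorem HasIP.exhibitsPattern {S : Type*} (h : HasIP.{u, v, w} T φ) {C : Set (Set S × Set S)}
    (hC : C.Countable) (hdisj : ∀ p ∈ C, p.1 ∩ p.2 = ∅) :
    ExhibitsPattern.{u, v, w} T φ C (∅ : Set (Set S × Set S)) := by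
  have := hC.to_subtype
  obtain ⟨M, a, b, hab⟩ := h.exists_realize_iff fun (p : C) i => i ∈ p.1.1
  refine ⟨M, b, fun p hp => ⟨a ⟨p, hp⟩, fun i hi => (hab _ _).2 hi, fun j hj hre => ?_⟩, by simp⟩
  have hj' : j ∈ p.1 ∩ p.2 := ⟨(hab _ _).1 hre, hj⟩
  simp [hdisj p hp] at hj'

theorem HasIP.isCM (h : HasIP.{u, v, w} T φ) : IsCM.{u, v, w} T φ :=
  fun _ _ _ hdisj => h.exhibitsPattern (toFinite _).countable hdisj

end

theorem consistency_maximal_iff_IP_general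
    {L : FirstOrder.Language.{u, v}} (T : L.Theory)
    {α β : Type*} (φ : L.Formula (α ⊕ β)) :
    IsCM.{u, v, w} T φ ↔ HasIP.{u, v, w} T φ :=
  ⟨fun h => hasIP_of_forall_lt h.exists_realize_iff_mem_of_lt, HasIP.isCM⟩

/-- `φ(x;y)` is consistency maximal in the complete theory `T` iff it has the
independence property in `T`. -/
theorem consistency_maximal_iff_IP
    {L : FirstOrder.Language.{u, v}} (T : L.Theory) (hT : T.IsComplete)
    {α β : Type*} (φ : L.Formula (α ⊕ β)) :
    IsCM.{u, v, w} T φ ↔ HasIP.{u, v, w} T φ :=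
  consistency_maximal_iff_IP_general T φ
end

section
/- Let L = {P, O, R} ∪ {E_k : 0<k<ω} be the relational language with P, O unary, R binary, and E_k k-ary, and let T₀ be the L-theory asserting: (A₁) P and O partition the universe; (A₂) for each k, E_k ⊆ O^k and E_k holds only on tuples with pairwise distinct entries; (A₃) R ⊆ P × O; (A₄) for each k, ∀y_0…y_{k−1}∀x (E_k(ȳ) → ¬⋀_{i<k} R(x,y_i)). Then the class K of finite L-structures satisfying T₀ has the amalgamation property: for all A, B₀, B₁ ∈ K and embeddings f_i : A → B_i (i<2), there exist C ∈ K and embeddings g_i : B_i → C with g₀ ∘ f₀ = g₁ ∘ f₁. -/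
open FirstOrder Language Structure

universe u

/-- The relation symbols of the language `L = {P, O, R} ∪ {E_k : 0 < k < ω}`:
`P, O` unary, `R` binary, and `EE k` a `(k+1)`-ary symbol representing `E_{k+1}`. -/
inductive PORERel : ℕ → Type
  | P : PORERel 1
  | O : PORERel 1
  | R : PORERel 2
  | EE : (k : ℕ) → PORERel (k + 1)

/-- The relational language `L = {P, O, R} ∪ {E_k : 0 < k < ω}`. -/
def PORELang : FirstOrder.Language :=
  { Functions := fun _ => Empty
    Relations := PORERel }

/-- The `L`-structure `M` satisfies the universal theory `T₀`:
(A₁) `P` and `O` partition the universe; (A₂) each `E_k ⊆ O^k` holds only on tuples with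
pairwise distinct entries; (A₃) `R ⊆ P × O`;
(A₄) `∀ ȳ ∀ x (E_k(ȳ) → ¬ ⋀_{i<k} R(x, y_i))`. -/
def SatT0 (M : Type u) [PORELang.Structure M] : Prop :=
  (∀ a : M,
    (RelMap (L := PORELang) PORERel.P ![a] ∨ RelMap (L := PORELang) PORERel.O ![a]) ∧
    ¬ (RelMap (L := PORELang) PORERel.P ![a] ∧ RelMap (L := PORELang) PORERel.O ![a])) ∧
  (∀ (k : ℕ) (v : Fin (k + 1) → M), RelMap (L := PORELang) (PORERel.EE k) v →
    (∀ i, RelMap (L := PORELang) PORERel.O ![v i]) ∧ Function.Injective v) ∧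
  (∀ a b : M, RelMap (L := PORELang) PORERel.R ![a, b] →
    RelMap (L := PORELang) PORERel.P ![a] ∧ RelMap (L := PORELang) PORERel.O ![b]) ∧
  (∀ (k : ℕ) (v : Fin (k + 1) → M) (x : M), RelMap (L := PORELang) (PORERel.EE k) v →
    ¬ ∀ i, RelMap (L := PORELang) PORERel.R ![x, v i])

/-! The free amalgam of `B₀` and `B₁` over `A` (glue along `A`, add no new relations) is again a
model of `T₀`. Axioms (A₁)–(A₃) constrain single points or single related tuples, and every
related tuple of the amalgam comes from `B₀` or from `B₁`. For (A₄), a point of `B₁` outside `A`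
is `R`-related only to points of `B₁`, so an `E`-tuple of `B₀` all of whose entries it dominates
lies in `A`, and its copy in `B₁` violates (A₄) there. -/

namespace FirstOrder.Language

variable {L : Language} {M N : Type*} [L.Structure M] [L.Structure N]

theorem Embedding.relMap_vec_one (g : M ↪[L] N) (r : L.Relations 1) (a : M) :
    RelMap r ![g a] ↔ RelMap r ![a] := by
  rw [← g.map_rel, ← FinVec.map_eq]
  rfl

theorem Embedding.relMap_vec_two (g : M ↪[L] N) (r : L.Relations 2) (a b : M) :
    RelMap r ![g a, g b] ↔ RelMap r ![a, b] := by
  rw [← g.map_rel, ← FinVec.map_eq]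
  rfl

variable {A B₀ B₁ C : Type*} [L.Structure A] [L.Structure B₀] [L.Structure B₁] [L.Structure C]

structure IsFreeAmalgam (f₀ : A ↪[L] B₀) (f₁ : A ↪[L] B₁) (g₀ : B₀ ↪[L] C) (g₁ : B₁ ↪[L] C) :
    Prop where
  comp_eq : g₀.comp f₀ = g₁.comp f₁
  mem_range (c : C) : c ∈ Set.range g₀ ∨ c ∈ Set.range g₁
  exists_of_apply_eq {b₀ : B₀} {b₁ : B₁} : g₀ b₀ = g₁ b₁ → ∃ a, f₀ a = b₀ ∧ f₁ a = b₁
  exists_comp_eq_of_relMap {n : ℕ} {r : L.Relations n} {v : Fin n → C} :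
    RelMap r v → (∃ w, g₀ ∘ w = v) ∨ ∃ w, g₁ ∘ w = v

namespace IsFreeAmalgam

variable {f₀ : A ↪[L] B₀} {f₁ : A ↪[L] B₁} {g₀ : B₀ ↪[L] C} {g₁ : B₁ ↪[L] C}

theorem symm (h : IsFreeAmalgam f₀ f₁ g₀ g₁) : IsFreeAmalgam f₁ f₀ g₁ g₀ where
  comp_eq := h.comp_eq.symm
  mem_range c := (h.mem_range c).symm
  exists_of_apply_eq hb := (h.exists_of_apply_eq hb.symm).imp fun _ ⟨h₀, h₁⟩ => ⟨h₁, h₀⟩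
  exists_comp_eq_of_relMap hv := (h.exists_comp_eq_of_relMap hv).symm

theorem exists_relMap_of_notMem_range (h : IsFreeAmalgam f₀ f₁ g₀ g₁) {n : ℕ}
    {r : L.Relations n} {v : Fin n → C} (hv : RelMap r v) {i : Fin n} (hi : v i ∉ Set.range g₀) :
    ∃ w, RelMap r w ∧ g₁ ∘ w = v := by
  rcases h.exists_comp_eq_of_relMap hv with ⟨w, rfl⟩ | ⟨w, rfl⟩
  · exact absurd ⟨w i, rfl⟩ hi
  · exact ⟨w, (g₁.map_rel r w).1 hv, rfl⟩

end IsFreeAmalgam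

def FreeAmalgam (_f₀ : A ↪[L] B₀) (f₁ : A ↪[L] B₁) : Type _ :=
  B₀ ⊕ {b : B₁ // b ∉ Set.range f₁}

namespace FreeAmalgam

variable (f₀ : A ↪[L] B₀) (f₁ : A ↪[L] B₁)

instance [Finite B₀] [Finite B₁] : Finite (FreeAmalgam f₀ f₁) :=
  inferInstanceAs (Finite (B₀ ⊕ _))

def inl : B₀ → FreeAmalgam f₀ f₁ := Sum.inl

open Classical in
noncomputable def inr (b : B₁) : FreeAmalgam f₀ f₁ :=
  (if h : b ∈ Set.range f₁ then Sum.inl (f₀ ((Equiv.ofInjective f₁ f₁.injective).symm ⟨b, h⟩))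
    else Sum.inr ⟨b, h⟩ : B₀ ⊕ {b : B₁ // b ∉ Set.range f₁})

variable {f₀ f₁}

theorem inl_injective : Function.Injective (inl f₀ f₁) := Sum.inl_injective

theorem inr_apply (a : A) : inr f₀ f₁ (f₁ a) = inl f₀ f₁ (f₀ a) := by
  rw [inr, dif_pos ⟨a, rfl⟩, Equiv.ofInjective_symm_apply]
  rfl

theorem exists_of_inl_eq_inr {b₀ : B₀} {b₁ : B₁} (h : inl f₀ f₁ b₀ = inr f₀ f₁ b₁) :
    ∃ a, f₀ a = b₀ ∧ f₁ a = b₁ := by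
  by_cases hb : b₁ ∈ Set.range f₁
  · obtain ⟨a, rfl⟩ := hb
    exact ⟨a, (inl_injective (h.trans (inr_apply a))).symm, rfl⟩
  · rw [inr, dif_neg hb] at h
    exact (Sum.inl_ne_inr h).elim

theorem exists_comp_of_inl_comp_eq_inr_comp {n : ℕ} {x : Fin n → B₀} {y : Fin n → B₁}
    (h : inl f₀ f₁ ∘ x = inr f₀ f₁ ∘ y) : ∃ u, f₀ ∘ u = x ∧ f₁ ∘ u = y := by
  choose u hu₀ hu₁ using fun i => exists_of_inl_eq_inr (congrFun h i)
  exact ⟨u, funext hu₀, funext hu₁⟩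

theorem inr_injective : Function.Injective (inr f₀ f₁) := by
  intro b b' h
  by_cases hb : b ∈ Set.range f₁
  · obtain ⟨a, rfl⟩ := hb
    obtain ⟨a', ha', rfl⟩ := exists_of_inl_eq_inr ((inr_apply a).symm.trans h)
    rw [f₀.injective ha']
  · by_cases hb' : b' ∈ Set.range f₁
    · obtain ⟨a, rfl⟩ := hb'
      obtain ⟨a', ha', rfl⟩ := exists_of_inl_eq_inr ((inr_apply a).symm.trans h.symm)
      rw [f₀.injective ha']
    · rw [inr, inr, dif_neg hb, dif_neg hb'] at h
      exact congrArg Subtype.val (Sum.inr_injective h)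

theorem mem_range_inl_or_inr (c : FreeAmalgam f₀ f₁) :
    c ∈ Set.range (inl f₀ f₁) ∨ c ∈ Set.range (inr f₀ f₁) := by
  rcases c with b | ⟨b, hb⟩
  · exact Or.inl ⟨b, rfl⟩
  · exact Or.inr ⟨b, by rw [inr, dif_neg hb]⟩

variable [L.IsRelational]

noncomputable instance : L.Structure (FreeAmalgam f₀ f₁) where
  funMap f := isEmptyElim f
  RelMap r v := (∃ w, RelMap r w ∧ inl f₀ f₁ ∘ w = v) ∨ ∃ w, RelMap r w ∧ inr f₀ f₁ ∘ w = v

theorem relMap_inl_comp {n : ℕ} (r : L.Relations n) (x : Fin n → B₀) :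
    RelMap r (inl f₀ f₁ ∘ x) ↔ RelMap r x := by
  refine ⟨?_, fun hx => Or.inl ⟨x, hx, rfl⟩⟩
  rintro (⟨w, hw, hwx⟩ | ⟨w, hw, hwx⟩)
  · rwa [← inl_injective.comp_left hwx]
  · obtain ⟨u, rfl, rfl⟩ := exists_comp_of_inl_comp_eq_inr_comp hwx.symm
    exact (f₀.map_rel r u).2 ((f₁.map_rel r u).1 hw)

theorem relMap_inr_comp {n : ℕ} (r : L.Relations n) (y : Fin n → B₁) :
    RelMap r (inr f₀ f₁ ∘ y) ↔ RelMap r y := by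
  refine ⟨?_, fun hy => Or.inr ⟨y, hy, rfl⟩⟩
  rintro (⟨w, hw, hwy⟩ | ⟨w, hw, hwy⟩)
  · obtain ⟨u, rfl, rfl⟩ := exists_comp_of_inl_comp_eq_inr_comp hwy
    exact (f₁.map_rel r u).2 ((f₀.map_rel r u).1 hw)
  · rwa [← inr_injective.comp_left hwy]

variable (f₀ f₁)

noncomputable def inlEmbedding : B₀ ↪[L] FreeAmalgam f₀ f₁ where
  toFun := inl f₀ f₁
  inj' := inl_injective
  map_fun' f := isEmptyElim f
  map_rel' := relMap_inl_comp

noncomputable def inrEmbedding : B₁ ↪[L] FreeAmalgam f₀ f₁ where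
  toFun := inr f₀ f₁
  inj' := inr_injective
  map_fun' f := isEmptyElim f
  map_rel' := relMap_inr_comp

theorem isFreeAmalgam : IsFreeAmalgam f₀ f₁ (inlEmbedding f₀ f₁) (inrEmbedding f₀ f₁) where
  comp_eq := Embedding.ext fun a => (inr_apply a).symm
  mem_range := mem_range_inl_or_inr
  exists_of_apply_eq := exists_of_inl_eq_inr
  exists_comp_eq_of_relMap := by
    rintro n r v (⟨w, -, rfl⟩ | ⟨w, -, rfl⟩)
    exacts [Or.inl ⟨w, rfl⟩, Or.inr ⟨w, rfl⟩]

end FreeAmalgam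

end FirstOrder.Language

instance : PORELang.IsRelational := fun _ => inferInstanceAs (IsEmpty Empty)

namespace SatT0

variable {B C : Type*} [PORELang.Structure B] [PORELang.Structure C]

theorem partition_apply (hB : SatT0 B) (g : B ↪[PORELang] C) (b : B) :
    (RelMap (L := PORELang) PORERel.P ![g b] ∨ RelMap (L := PORELang) PORERel.O ![g b]) ∧
      ¬ (RelMap (L := PORELang) PORERel.P ![g b] ∧ RelMap (L := PORELang) PORERel.O ![g b]) := by
  rw [g.relMap_vec_one PORERel.P, g.relMap_vec_one PORERel.O]
  exact hB.1 b

theorem O_and_injective_of_EE_of_comp_eq (hB : SatT0 B) (g : B ↪[PORELang] C) {k : ℕ}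
    {w : Fin (k + 1) → B} {v : Fin (k + 1) → C} (hw : g ∘ w = v)
    (hE : RelMap (L := PORELang) (PORERel.EE k) v) :
    (∀ i, RelMap (L := PORELang) PORERel.O ![v i]) ∧ Function.Injective v := by
  subst hw
  obtain ⟨hO, hinj⟩ := hB.2.1 k w ((g.map_rel _ w).1 hE)
  exact ⟨fun i => (g.relMap_vec_one _ _).2 (hO i), g.injective.comp hinj⟩

theorem P_and_O_of_R_of_comp_eq (hB : SatT0 B) (g : B ↪[PORELang] C) {w : Fin 2 → B}
    {a b : C} (hw : g ∘ w = ![a, b]) (hR : RelMap (L := PORELang) PORERel.R ![a, b]) :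
    RelMap (L := PORELang) PORERel.P ![a] ∧ RelMap (L := PORELang) PORERel.O ![b] := by
  obtain rfl : g (w 0) = a := congrFun hw 0
  obtain rfl : g (w 1) = b := congrFun hw 1
  obtain ⟨hP, hO⟩ := hB.2.2.1 (w 0) (w 1) ((g.relMap_vec_two _ _ _).1 hR)
  exact ⟨(g.relMap_vec_one _ _).2 hP, (g.relMap_vec_one _ _).2 hO⟩

end SatT0

namespace FirstOrder.Language.IsFreeAmalgam

variable {A B₀ B₁ C : Type*} [PORELang.Structure A] [PORELang.Structure B₀]
  [PORELang.Structure B₁] [PORELang.Structure C] {f₀ : A ↪[PORELang] B₀}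
  {f₁ : A ↪[PORELang] B₁} {g₀ : B₀ ↪[PORELang] C} {g₁ : B₁ ↪[PORELang] C}

theorem not_forall_relMap_R_of_relMap_EE (h : IsFreeAmalgam f₀ f₁ g₀ g₁) (hB₀ : SatT0 B₀)
    (hB₁ : SatT0 B₁) {k : ℕ} {w : Fin (k + 1) → B₀}
    (hE : RelMap (L := PORELang) (PORERel.EE k) w) (x : C) :
    ¬ ∀ i, RelMap (L := PORELang) PORERel.R ![x, g₀ (w i)] := by
  intro hR
  by_cases hx : x ∈ Set.range g₀
  · obtain ⟨b, rfl⟩ := hx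
    exact hB₀.2.2.2 k w b hE fun i => (g₀.relMap_vec_two _ _ _).1 (hR i)
  obtain ⟨b, rfl⟩ := (h.mem_range x).resolve_left hx
  have hwA : ∀ i, ∃ a, f₀ a = w i ∧ RelMap (L := PORELang) PORERel.R ![b, f₁ a] := by
    intro i
    obtain ⟨u, hu, hgu⟩ := h.exists_relMap_of_notMem_range (hR i) (i := 0) hx
    obtain ⟨a, ha₀, ha₁⟩ := h.exists_of_apply_eq (congrFun hgu 1).symm
    have hu₀ : u 0 = b := g₁.injective (congrFun hgu 0)
    rw [← FinVec.etaExpand_eq u] at hu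
    exact ⟨a, ha₀, by rwa [← hu₀, ha₁]⟩
  choose a ha₀ hR₁ using hwA
  obtain rfl : f₀ ∘ a = w := funext ha₀
  exact hB₁.2.2.2 k (f₁ ∘ a) b ((f₁.map_rel _ a).2 ((f₀.map_rel _ a).1 hE)) hR₁

theorem satT0 (h : IsFreeAmalgam f₀ f₁ g₀ g₁) (hB₀ : SatT0 B₀) (hB₁ : SatT0 B₁) : SatT0 C := by
  refine ⟨fun c => ?_, fun k v hE => ?_, fun a b hR => ?_, fun k v x hE => ?_⟩
  · rcases h.mem_range c with ⟨b, rfl⟩ | ⟨b, rfl⟩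
    exacts [hB₀.partition_apply g₀ b, hB₁.partition_apply g₁ b]
  · rcases h.exists_comp_eq_of_relMap hE with ⟨w, hw⟩ | ⟨w, hw⟩
    exacts [hB₀.O_and_injective_of_EE_of_comp_eq g₀ hw hE,
      hB₁.O_and_injective_of_EE_of_comp_eq g₁ hw hE]
  · rcases h.exists_comp_eq_of_relMap hR with ⟨w, hw⟩ | ⟨w, hw⟩
    exacts [hB₀.P_and_O_of_R_of_comp_eq g₀ hw hR, hB₁.P_and_O_of_R_of_comp_eq g₁ hw hR]
  · rcases h.exists_comp_eq_of_relMap hE with ⟨w, rfl⟩ | ⟨w, rfl⟩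
    exacts [h.not_forall_relMap_R_of_relMap_EE hB₀ hB₁ ((g₀.map_rel _ w).1 hE) x,
      h.symm.not_forall_relMap_R_of_relMap_EE hB₁ hB₀ ((g₁.map_rel _ w).1 hE) x]

end FirstOrder.Language.IsFreeAmalgam

theorem finite_models_T0_amalgamation_general
    (A B₀ B₁ : Type u)
    [PORELang.Structure A] [PORELang.Structure B₀] [PORELang.Structure B₁]
    [Finite B₀] [Finite B₁]
    (hB₀ : SatT0 B₀) (hB₁ : SatT0 B₁)
    (f₀ : A ↪[PORELang] B₀) (f₁ : A ↪[PORELang] B₁) :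
    ∃ (C : Type u) (SC : PORELang.Structure C), Finite C ∧ @SatT0 C SC ∧
      ∃ (g₀ : @Language.Embedding PORELang B₀ C _ SC)
        (g₁ : @Language.Embedding PORELang B₁ C _ SC),
        g₀.comp f₀ = g₁.comp f₁ :=
  have h := FreeAmalgam.isFreeAmalgam f₀ f₁
  ⟨FreeAmalgam f₀ f₁, inferInstance, inferInstance, h.satT0 hB₀ hB₁, _, _, h.comp_eq⟩

/-- the class of finite models of `T₀` has the amalgamation property. -/
theorem finite_models_T0_amalgamation
    (A B₀ B₁ : Type u)
    [PORELang.Structure A] [PORELang.Structure B₀] [PORELang.Structure B₁]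
    [Finite A] [Finite B₀] [Finite B₁]
    (hA : SatT0 A) (hB₀ : SatT0 B₀) (hB₁ : SatT0 B₁)
    (f₀ : A ↪[PORELang] B₀) (f₁ : A ↪[PORELang] B₁) :
    ∃ (C : Type u) (SC : PORELang.Structure C), Finite C ∧ @SatT0 C SC ∧
      ∃ (g₀ : @Language.Embedding PORELang B₀ C _ SC)
        (g₁ : @Language.Embedding PORELang B₁ C _ SC),
        g₀.comp f₀ = g₁.comp f₁ :=
  finite_models_T0_amalgamation_general A B₀ B₁ hB₀ hB₁ f₀ f₁
end

section
/- Fix 1<k<ω and let T be a complete first-order theory. A partitioned formula φ(x;y) is PM^(k) in T if and only if φ realizes every finite k-hypergraph in T, i.e., for every n<ω and every set E of k-element subsets of n there exist a model M ⊨ T and parameters b_0,…,b_{n−1} ∈ M^y such that: (i) for every k-element subset S ⊆ n with S ∉ E, M ⊨ ¬∃x ⋀_{i∈S} φ(x;b_i); and (ii) for every clique S ⊆ n (i.e., every subset S all of whose k-element subsets belong to E), M ⊨ ∃x ⋀_{i∈S} φ(x;b_i). -/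
open FirstOrder Language Set

universe u v w

/-- `φ(x;y)` is `PM^(k)` in `T`: it exhibits every reasonable positive pattern all of whose
inconsistency conditions have size `k`. -/
def IsPMk (k : ℕ) {L : FirstOrder.Language.{u, v}} (T : L.Theory) {α β : Type*}
    (φ : L.Formula (α ⊕ β)) : Prop :=
  ∀ (n : ℕ) (C I : Set (Set (Fin n) × Set (Fin n))),
    IsPositivePattern C I → IsReasonablePositive C I →
    (∀ p ∈ I, p.1.ncard = k) →
      ExhibitsPattern.{u, v, w} T φ C I

/-- for `1 < k < ω`, `φ(x;y)` is `PM^(k)` in the complete theory `T` iff `φ`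
realizes every finite `k`-hypergraph in `T`. -/
theorem PMk_iff_realizes_every_finite_k_hypergraph
    (k : ℕ) (hk : 1 < k)
    {L : FirstOrder.Language.{u, v}} (T : L.Theory) (hT : T.IsComplete)
    {α β : Type*} (φ : L.Formula (α ⊕ β)) :
    IsPMk.{u, v, w} k T φ ↔
      ∀ (n : ℕ) (E : Set (Set (Fin n))), (∀ S ∈ E, S.ncard = k) →
        ∃ (M : Theory.ModelType.{u, v, w} T) (b : Fin n → β → M),
          (∀ S : Set (Fin n), S.ncard = k → S ∉ E →
            ¬ ∃ a : α → M, ∀ i ∈ S, φ.Realize (Sum.elim a (b i))) ∧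
          (∀ S : Set (Fin n), (∀ S' ⊆ S, S'.ncard = k → S' ∈ E) →
            ∃ a : α → M, ∀ i ∈ S, φ.Realize (Sum.elim a (b i))) := by
  constructor
  · intro h n E hE
    have hpos : IsPositivePattern
        {p : Set (Fin n) × Set (Fin n) |
          p.1.Nonempty ∧ (∀ S' ⊆ p.1, S'.ncard = k → S' ∈ E) ∧ p.2 = ∅}
        {p | p.1.ncard = k ∧ p.1 ∉ E ∧ p.2 = ∅} := by
      rintro p (⟨h1, h2, h3⟩ | ⟨h1, h2, h3⟩)
      · exact ⟨Set.nonempty_iff_ne_empty.mp h1, h3⟩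
      · refine ⟨fun he => ?_, h3⟩
        rw [he, Set.ncard_empty] at h1
        omega
    have hreas : IsReasonablePositive
        {p : Set (Fin n) × Set (Fin n) |
          p.1.Nonempty ∧ (∀ S' ⊆ p.1, S'.ncard = k → S' ∈ E) ∧ p.2 = ∅}
        {p | p.1.ncard = k ∧ p.1 ∉ E ∧ p.2 = ∅} := by
      rintro p ⟨h1, h2, -⟩ q ⟨-, hq, -⟩ hsub
      exact h2 (hq p.1 hsub h1)
    obtain ⟨M, b, hC, hI⟩ := h n
      {p | p.1.Nonempty ∧ (∀ S' ⊆ p.1, S'.ncard = k → S' ∈ E) ∧ p.2 = ∅}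
      {p | p.1.ncard = k ∧ p.1 ∉ E ∧ p.2 = ∅}
      hpos hreas (fun p hp => hp.1)
    refine ⟨M, b, ?_, ?_⟩
    · intro S hS hSE hex
      obtain ⟨a, ha⟩ := hex
      exact hI (S, ∅) ⟨hS, hSE, rfl⟩ ⟨a, ha, by simp⟩
    · intro S hS
      rcases S.eq_empty_or_nonempty with rfl | hSne
      · exact ⟨fun _ => Nonempty.some inferInstance, by simp⟩
      · obtain ⟨a, ha, -⟩ := hC (S, ∅) ⟨hSne, hS, rfl⟩
        exact ⟨a, ha⟩
  · intro h n C I hpos hreas hcard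
    obtain ⟨M, b, h1, h2⟩ := h n {S | S.ncard = k ∧ (S, (∅ : Set (Fin n))) ∉ I}
      (fun S hS => hS.1)
    refine ⟨M, b, ?_, ?_⟩
    · intro p hp
      obtain ⟨hne, hemp⟩ := hpos p (Set.mem_union_left _ hp)
      have hclq : ∀ S' ⊆ p.1, S'.ncard = k →
          S' ∈ {S : Set (Fin n) | S.ncard = k ∧ (S, (∅ : Set (Fin n))) ∉ I} :=
        fun S' hsub hScard => ⟨hScard, fun hSI => hreas (S', ∅) hSI p hp hsub⟩
      obtain ⟨a, ha⟩ := h2 p.1 hclq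
      exact ⟨a, ha, by rw [hemp]; simp⟩
    · intro p hp hex
      obtain ⟨hne, hemp⟩ := hpos p (Set.mem_union_right _ hp)
      have hpeq : p = (p.1, ∅) := by rw [← hemp]
      obtain ⟨a, ha, -⟩ := hex
      exact h1 p.1 (hcard p hp) (fun hE => hE.2 (hpeq ▸ hp)) ⟨a, ha⟩
end

section
/- Fix 1<k<ω and let T be a complete first-order theory. If a partitioned formula φ(x;y) is PM^(k+1) in T, then the formula ψ(x; y_0,…,y_k) := ⋀_{i<k+1} φ(x;y_i) is PM^(k) in T. -/
/-!
Replace each parameter `b_i` of `ψ` by the block `(b_{i,j})_{j ≤ k}` of parameters of `φ`, so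
that `ψ(x; b_i)` holds iff `φ(x; b_{i,j})` holds for all `j`. A consistency condition `X` for `ψ`
becomes `X × (k+1)` for `φ`, and an inconsistency condition `Z` of size `k` becomes some
`W ⊆ Z × (k+1)` of size `k + 1` projecting onto `Z` (this needs `k + 1 ≥ 2`): an `x` satisfying
`ψ` on all of `Z` would satisfy `φ` on all of `W`. Reasonableness survives, since
`W ⊆ Y × (k+1)` forces `Z ⊆ Y`.
-/

open FirstOrder Language Set

universe u v w

/-- The conjunction of a finite set of formulas, as `BoundedFormula.iInf` was defined in the
older Mathlib (indexed by a `Finset`). -/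
noncomputable def finsetIInf {L : FirstOrder.Language.{u, v}} {α β : Type*} {n : ℕ}
    (s : Finset β) (f : β → L.BoundedFormula α n) : L.BoundedFormula α n :=
  (s.toList.map f).foldr (· ⊓ ·) ⊤

theorem realize_finsetIInf {L : FirstOrder.Language.{u, v}} {α β : Type*} {n : ℕ}
    {M : Type*} [L.Structure M] (s : Finset β) (f : β → L.BoundedFormula α n)
    (v : α → M) (xs : Fin n → M) :
    (finsetIInf s f).Realize v xs ↔ ∀ b ∈ s, (f b).Realize v xs := by
  suffices ∀ l : List β, (((l.map f).foldr (· ⊓ ·) ⊤ : L.BoundedFormula α n)).Realize v xs ↔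
      ∀ b ∈ l, (f b).Realize v xs by
    simp only [finsetIInf, this, Finset.mem_toList]
  intro l
  induction l with
  | nil => simp
  | cons a l ih => simp [ih]

section Patterns

variable {S S' : Type*}

def mapConditions (f : S → S') (C : Set (Set S × Set S)) : Set (Set S' × Set S') :=
  (fun p => (f '' p.1, f '' p.2)) '' C

theorem IsPositivePattern.mapConditions {C I : Set (Set S × Set S)} (h : IsPositivePattern C I)
    (f : S → S') : IsPositivePattern (mapConditions f C) (mapConditions f I) := by
  rintro _ (⟨p, hp, rfl⟩ | ⟨p, hp, rfl⟩) <;>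
  · obtain ⟨hne, hempty⟩ := h p (by simp [hp])
    simp [hne, hempty]

theorem IsReasonablePositive.mapConditions {C I : Set (Set S × Set S)}
    (h : IsReasonablePositive C I) {f : S → S'} (hf : Function.Injective f) :
    IsReasonablePositive (mapConditions f C) (mapConditions f I) := by
  rintro _ ⟨p, hp, rfl⟩ _ ⟨q, hq, rfl⟩ hsub
  exact h p hp q hq ((Set.image_subset_image_iff hf).1 hsub)

theorem ExhibitsPattern.of_mapConditions {L : FirstOrder.Language.{u, v}} {T : L.Theory}
    {α β : Type*} {φ : L.Formula (α ⊕ β)} {C I : Set (Set S × Set S)} {f : S → S'}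
    (h : ExhibitsPattern.{u, v, w} T φ (mapConditions f C) (mapConditions f I)) :
    ExhibitsPattern.{u, v, w} T φ C I := by
  obtain ⟨M, b, hC, hI⟩ := h
  refine ⟨M, b ∘ f, fun p hp => ?_, fun p hp => ?_⟩
  · simpa using hC _ ⟨p, hp, rfl⟩
  · simpa using hI _ ⟨p, hp, rfl⟩

end Patterns

theorem IsPMk.exhibitsPattern_of_finite {k : ℕ} {L : FirstOrder.Language.{u, v}} {T : L.Theory}
    {α β : Type*} {φ : L.Formula (α ⊕ β)} (hφ : IsPMk.{u, v, w} k T φ)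
    {S : Type*} [Finite S] {C I : Set (Set S × Set S)} (hpos : IsPositivePattern C I)
    (hres : IsReasonablePositive C I) (hsize : ∀ p ∈ I, p.1.ncard = k) :
    ExhibitsPattern.{u, v, w} T φ C I := by
  obtain ⟨n, ⟨e⟩⟩ := Finite.exists_equiv_fin S
  refine ExhibitsPattern.of_mapConditions (f := e)
    (hφ n _ _ (hpos.mapConditions e) (hres.mapConditions e.injective) ?_)
  rintro _ ⟨p, hp, rfl⟩
  rw [Set.ncard_image_of_injective _ e.injective, hsize p hp]

section Conjunction

variable {L : FirstOrder.Language.{u, v}} {α β J : Type*}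

/-- The paper's `ψ(x; y₀ … y_k) = ⋀_{i<k+1} φ(x; y_i)`, for `J = Fin (k + 1)`. -/
noncomputable def conjCopies (J : Type*) [Fintype J] (φ : L.Formula (α ⊕ β)) :
    L.Formula (α ⊕ (J × β)) :=
  finsetIInf Finset.univ (fun j => φ.relabel (Sum.map id (Prod.mk j)))

theorem realize_conjCopies [Fintype J] (φ : L.Formula (α ⊕ β)) {M : Type*} [L.Structure M]
    (a : α → M) (b : J × β → M) :
    (conjCopies J φ).Realize (Sum.elim a b) ↔ ∀ j, φ.Realize (Sum.elim a (fun y => b (j, y))) := by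
  refine (realize_finsetIInf _ _ _ _).trans ?_
  simp only [Finset.mem_univ, true_implies]
  exact forall_congr' fun j => Formula.realize_relabel.trans (by rw [Sum.elim_comp_map]; rfl)

end Conjunction

section Spread

variable {S J : Type*}

def spreadConsistency (C : Set (Set S × Set S)) : Set (Set (S × J) × Set (S × J)) :=
  (fun q => (Prod.fst ⁻¹' q.1, ∅)) '' C

def spreadInconsistency (I : Set (Set S × Set S)) : Set (Set (S × J) × Set (S × J)) :=
  {p | p.2 = ∅ ∧ ∃ q ∈ I, Prod.fst '' p.1 = q.1 ∧ p.1.ncard = q.1.ncard + 1}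

theorem IsPositivePattern.spread [Nonempty J] {C I : Set (Set S × Set S)}
    (h : IsPositivePattern C I) :
    IsPositivePattern (spreadConsistency (J := J) C) (spreadInconsistency I) := by
  rintro p (⟨q, hq, rfl⟩ | ⟨hp₂, q, hq, hfst, -⟩)
  · obtain ⟨i, hi⟩ := Set.nonempty_iff_ne_empty.2 (h q (Or.inl hq)).1
    exact ⟨Set.nonempty_iff_ne_empty.1 ⟨(i, Classical.arbitrary J), hi⟩, rfl⟩
  · refine ⟨fun hempty => (h q (Or.inr hq)).1 ?_, hp₂⟩
    rw [← hfst, hempty, Set.image_empty]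

theorem IsReasonablePositive.spread {C I : Set (Set S × Set S)} (h : IsReasonablePositive C I) :
    IsReasonablePositive (spreadConsistency (J := J) C) (spreadInconsistency I) := by
  rintro p ⟨-, q, hq, hfst, -⟩ _ ⟨q', hq', rfl⟩ hsub
  exact h q hq q' hq' (hfst ▸ Set.image_subset_iff.2 hsub)

theorem ncard_of_mem_spreadInconsistency {I : Set (Set S × Set S)} {k : ℕ}
    (hsize : ∀ q ∈ I, q.1.ncard = k) :
    ∀ p ∈ spreadInconsistency (J := J) I, p.1.ncard = k + 1 := by
  rintro p ⟨-, q, hq, -, hcard⟩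
  rw [hcard, hsize q hq]

theorem exists_fst_image_eq_ncard_succ {Z : Set S} (hZ : Z.Finite) (hne : Z.Nonempty)
    {j₀ j₁ : J} (hj : j₀ ≠ j₁) :
    ∃ W : Set (S × J), Prod.fst '' W = Z ∧ W.ncard = Z.ncard + 1 := by
  obtain ⟨z, hz⟩ := hne
  have hinj : Function.Injective (fun i : S => (i, j₀)) := fun _ _ h => congrArg Prod.fst h
  have hnotMem : (z, j₁) ∉ (fun i => (i, j₀)) '' Z := fun ⟨_, _, h⟩ => hj (congrArg Prod.snd h)
  refine ⟨insert (z, j₁) ((fun i => (i, j₀)) '' Z), ?_, ?_⟩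
  · rw [Set.image_insert_eq, Set.image_image, Set.image_id', Set.insert_eq_of_mem hz]
  · rw [Set.ncard_insert_of_notMem hnotMem (hZ.image _), Set.ncard_image_of_injective _ hinj]

end Spread

theorem ExhibitsPattern.conjCopies_of_spread {L : FirstOrder.Language.{u, v}} {T : L.Theory}
    {α β S J : Type*} [Fintype J] {φ : L.Formula (α ⊕ β)} {C I : Set (Set S × Set S)}
    (h : ExhibitsPattern.{u, v, w} T φ (spreadConsistency (J := J) C) (spreadInconsistency I))
    (hpos : IsPositivePattern C I)
    (hW : ∀ q ∈ I, ∃ W : Set (S × J), Prod.fst '' W = q.1 ∧ W.ncard = q.1.ncard + 1) :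
    ExhibitsPattern.{u, v, w} T (conjCopies J φ) C I := by
  obtain ⟨M, c, hC, hI⟩ := h
  refine ⟨M, fun i p => c (i, p.1) p.2, fun q hq => ?_, fun q hq => ?_⟩
  · obtain ⟨a, ha, -⟩ := hC _ ⟨q, hq, rfl⟩
    refine ⟨a, fun i hi => (realize_conjCopies φ a _).2 fun j => ha (i, j) hi, ?_⟩
    simp [(hpos q (Or.inl hq)).2]
  · rintro ⟨a, ha, -⟩
    obtain ⟨W, hfst, hcard⟩ := hW q hq
    refine hI (W, ∅) ⟨rfl, q, hq, hfst, hcard⟩ ⟨a, fun w hw => ?_, by simp⟩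
    have hw₁ : w.1 ∈ q.1 := hfst ▸ Set.mem_image_of_mem Prod.fst hw
    exact (realize_conjCopies φ a _).1 (ha w.1 hw₁) w.2

theorem PMk_succ_implies_PMk_of_conjunction_general
    (k : ℕ) (hk : 1 < k)
    {L : FirstOrder.Language.{u, v}} (T : L.Theory)
    {α β : Type*} (φ : L.Formula (α ⊕ β))
    (hφ : IsPMk.{u, v, w} (k + 1) T φ) :
    IsPMk.{u, v, w} k T
      (finsetIInf (Finset.univ : Finset (Fin (k + 1)))
        (fun i => φ.relabel (Sum.map id (Prod.mk i) :
          α ⊕ β → α ⊕ (Fin (k + 1) × β)))) := by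
  intro n C I hpos hres hsize
  have h01 : (⟨0, by omega⟩ : Fin (k + 1)) ≠ ⟨1, by omega⟩ := by simp
  have hW (q) (hq : q ∈ I) :
      ∃ W : Set (Fin n × Fin (k + 1)), Prod.fst '' W = q.1 ∧ W.ncard = q.1.ncard + 1 :=
    exists_fst_image_eq_ncard_succ (Set.toFinite _)
      (Set.nonempty_iff_ne_empty.2 (hpos q (Or.inr hq)).1) h01
  exact ExhibitsPattern.conjCopies_of_spread
    (hφ.exhibitsPattern_of_finite hpos.spread hres.spread
      (ncard_of_mem_spreadInconsistency hsize)) hpos hW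

/-- for `1 < k < ω`, if `φ(x;y)` is `PM^(k+1)` in the complete theory `T`, then
the partitioned formula `ψ(x; y₀ … y_k) = ⋀_{i<k+1} φ(x; y_i)` is `PM^(k)` in `T`. -/
theorem PMk_succ_implies_PMk_of_conjunction
    (k : ℕ) (hk : 1 < k)
    {L : FirstOrder.Language.{u, v}} (T : L.Theory) (hT : T.IsComplete)
    {α β : Type*} (φ : L.Formula (α ⊕ β))
    (hφ : IsPMk.{u, v, w} (k + 1) T φ) :
    IsPMk.{u, v, w} k T
      (finsetIInf (Finset.univ : Finset (Fin (k + 1)))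
        (fun i => φ.relabel (Sum.map id (Prod.mk i) :
          α ⊕ β → α ⊕ (Fin (k + 1) × β)))) :=
  PMk_succ_implies_PMk_of_conjunction_general k hk T φ hφ
end
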